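/- arXiv:1009.0488 — 7 statements merged into one kernel-verified Lean document; each statement's English description precedes it below -/
import Mathlib

section
/- Let τ be an algebraic integer of degree d with norm N(τ), and let c be a rational integer. Then τ divides c in Z[τ] if and only if N(τ) divides c in Z. -/
/-!
Writing `p = X * p.divX + C (p.coeff 0)` and evaluating the minimal polynomial at `τ` shows that
`τ` divides its constant coefficient `±N(τ)` in `ℤ[τ]`. Conversely, if `c = τ * p(τ)` then `τ` is a
root of `C c - X * p`, which the minimal polynomial divides because `ℤ` is integrally closed;
comparing constant coefficients gives `±N(τ) ∣ c`.
-/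

open Polynomial

section

variable {R S : Type*} [CommRing R] [CommRing S] [Algebra R S]

theorem Polynomial.algebraMap_coeff_zero_eq_mul_aeval_of_aeval_eq_zero {p : R[X]} {τ : S}
    (hp : aeval τ p = 0) : algebraMap R S (p.coeff 0) = τ * aeval τ (-p.divX) := by
  have hsplit := congrArg (aeval τ) (X_mul_divX_add p)
  simp only [map_add, map_mul, aeval_X, aeval_C, hp] at hsplit
  rw [map_neg]
  linear_combination hsplit

theorem exists_mem_adjoin_mul_eq_coeff_zero_minpoly (τ : S) :
    ∃ x ∈ Algebra.adjoin R {τ}, algebraMap R S ((minpoly R τ).coeff 0) = τ * x :=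
  ⟨_, aeval_mem_adjoin_singleton R _,
    algebraMap_coeff_zero_eq_mul_aeval_of_aeval_eq_zero (minpoly.aeval R τ)⟩

theorem coeff_zero_minpoly_dvd_of_mul_mem_adjoin [IsDomain R] [IsIntegrallyClosed R] [IsDomain S]
    [Module.IsTorsionFree R S] {τ : S} (hτ : IsIntegral R τ) {c : R} {x : S}
    (hx : x ∈ Algebra.adjoin R {τ}) (hc : algebraMap R S c = τ * x) :
    (minpoly R τ).coeff 0 ∣ c := by
  rw [Algebra.adjoin_singleton_eq_range_aeval] at hx
  obtain ⟨p, rfl⟩ : ∃ p : R[X], aeval τ p = x := hx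
  have hroot : aeval τ (C c - X * p) = 0 := by
    rw [map_sub, map_mul, aeval_C, aeval_X, hc, sub_self]
  simpa using map_dvd constantCoeff (minpoly.isIntegrallyClosed_dvd hτ hroot)

theorem exists_mem_adjoin_mul_eq_iff_coeff_zero_minpoly_dvd [IsDomain R] [IsIntegrallyClosed R]
    [IsDomain S] [Module.IsTorsionFree R S] {τ : S} (hτ : IsIntegral R τ) (c : R) :
    (∃ x ∈ Algebra.adjoin R {τ}, algebraMap R S c = τ * x) ↔ (minpoly R τ).coeff 0 ∣ c := by
  refine ⟨fun ⟨x, hx, hc⟩ ↦ coeff_zero_minpoly_dvd_of_mul_mem_adjoin hτ hx hc, ?_⟩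
  rintro ⟨k, rfl⟩
  obtain ⟨x, hx, hcoeff⟩ := exists_mem_adjoin_mul_eq_coeff_zero_minpoly (R := R) τ
  refine ⟨x * algebraMap R S k, Subalgebra.mul_mem _ hx (Subalgebra.algebraMap_mem _ k), ?_⟩
  rw [map_mul, hcoeff, mul_assoc]

end

theorem divides_rat_int_iff_norm_divides_general
    (τ : ℂ) (hint : IsIntegral ℤ τ)
    (d : ℕ)
    (Nτ : ℤ) (hN : (minpoly ℤ τ).coeff 0 = (-1) ^ d * Nτ)
    (c : ℤ) :
    (∃ x ∈ Algebra.adjoin ℤ ({τ} : Set ℂ), (c : ℂ) = τ * x) ↔ Nτ ∣ c := by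
  rw [← (isUnit_neg_one.pow d).mul_left_dvd, ← hN,
    ← exists_mem_adjoin_mul_eq_iff_coeff_zero_minpoly_dvd hint, eq_intCast]

/-- **Divisibility lemma.** Let `τ` be an algebraic integer of degree `d` with norm `Nτ`
(so that the constant coefficient of its minimal polynomial is `(-1)^d * Nτ`),
and let `c` be a rational integer. Then `τ` divides `c` in `ℤ[τ]` if and only if
`Nτ` divides `c` in `ℤ`. -/
theorem divides_rat_int_iff_norm_divides
    (τ : ℂ) (hint : IsIntegral ℤ τ) (hτ : 1 < ‖τ‖)
    (d : ℕ) (hd : d = (minpoly ℤ τ).natDegree)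
    (Nτ : ℤ) (hN : (minpoly ℤ τ).coeff 0 = (-1) ^ d * Nτ)
    (c : ℤ) :
    (∃ x ∈ Algebra.adjoin ℤ ({τ} : Set ℂ), (c : ℂ) = τ * x) ↔ Nτ ∣ c :=
  divides_rat_int_iff_norm_divides_general τ hint d Nτ hN c
end

section
/- Let τ be an algebraic integer with norm N(τ) and let w ≥ 1. The set of sums Σ_{j=0}^{w-1} a_j τ^j with a_j ∈ {0, 1, ..., |N(τ)|−1} is a complete residue system modulo τ^w in Z[τ]; in particular there are exactly |N(τ)|^w residue classes modulo τ^w in Z[τ]. -/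
/-!
Every element of `ℤ[τ]` is congruent modulo `τ` to its constant term, and by Gauss's lemma
(`minpoly.isIntegrallyClosed_dvd`) an integer is divisible by `τ` in `ℤ[τ]` exactly when it is
divisible by the constant coefficient `±N(τ)` of the minimal polynomial; so `ℤ[τ] ⧸ (τ) ≅ ℤ ⧸ (N(τ))`
and `0, …, |N(τ)| - 1` represent the classes modulo `τ`. Since `τ` is not a zero divisor, digits can
be peeled off one at a time, which gives existence and uniqueness of the expansions of length `w`.
-/

open Polynomial

section Digits

variable {A : Type*} [CommRing A]

theorem sum_fin_succ_mul_pow {w : ℕ} (f : Fin (w + 1) → A) (t : A) :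
    ∑ j, f j * t ^ (j : ℕ) = f 0 + t * ∑ j : Fin w, f j.succ * t ^ (j : ℕ) := by
  simp only [Fin.sum_univ_succ, Fin.val_zero, pow_zero, mul_one, Fin.val_succ, Finset.mul_sum,
    pow_succ]
  congr 1
  exact Finset.sum_congr rfl fun j _ => by ring

theorem Int.eq_of_dvd_sub_of_lt_abs {N a b : ℤ} (ha : 0 ≤ a ∧ a < |N|) (hb : 0 ≤ b ∧ b < |N|)
    (h : N ∣ a - b) : a = b := by
  have hlt : |a - b| < |N| := abs_sub_lt_iff.2 ⟨by omega, by omega⟩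
  have := Int.eq_zero_of_abs_lt_dvd ((abs_dvd _ _).2 h) hlt
  omega

variable {t : A} {N : ℤ}

theorem exists_digit_dvd_sub (hN : N ≠ 0) (hsurj : ∀ z : A, ∃ m : ℤ, t ∣ z - m)
    (hker : ∀ m : ℤ, N ∣ m → t ∣ (m : A)) (z : A) :
    ∃ r : ℤ, (0 ≤ r ∧ r < |N|) ∧ t ∣ z - r := by
  obtain ⟨m, hm⟩ := hsurj z
  refine ⟨m % |N|, ⟨Int.emod_nonneg m (abs_ne_zero.2 hN), Int.emod_lt_of_pos m (abs_pos.2 hN)⟩, ?_⟩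
  have hred : t ∣ ((m - m % |N| : ℤ) : A) := hker _ ((self_dvd_abs N).trans Int.dvd_self_sub_emod)
  push_cast at hred
  simpa using dvd_add hm hred

theorem exists_digits_pow_dvd_sub (hN : N ≠ 0) (hsurj : ∀ z : A, ∃ m : ℤ, t ∣ z - m)
    (hker : ∀ m : ℤ, N ∣ m → t ∣ (m : A)) (w : ℕ) (z : A) :
    ∃ a : Fin w → ℤ, (∀ j, 0 ≤ a j ∧ a j < |N|) ∧ t ^ w ∣ z - ∑ j, (a j : A) * t ^ (j : ℕ) := by
  induction w generalizing z with
  | zero => exact ⟨Fin.elim0, fun j => j.elim0, by simp⟩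
  | succ w ih =>
    obtain ⟨r, hr, y, hy⟩ := exists_digit_dvd_sub hN hsurj hker z
    obtain ⟨a, ha, x, hx⟩ := ih y
    refine ⟨Fin.cons r a, Fin.cases hr ha, x, ?_⟩
    rw [sum_fin_succ_mul_pow]
    simp only [Fin.cons_zero, Fin.cons_succ]
    linear_combination hy + t * hx

theorem digits_eq_of_pow_dvd_sub (ht : IsLeftRegular t) (hker : ∀ m : ℤ, t ∣ (m : A) → N ∣ m)
    {w : ℕ} {a b : Fin w → ℤ} (ha : ∀ j, 0 ≤ a j ∧ a j < |N|) (hb : ∀ j, 0 ≤ b j ∧ b j < |N|)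
    (h : t ^ w ∣ ∑ j, (a j : A) * t ^ (j : ℕ) - ∑ j, (b j : A) * t ^ (j : ℕ)) : a = b := by
  induction w with
  | zero => exact funext fun j => j.elim0
  | succ w ih =>
    obtain ⟨x, hx⟩ := h
    rw [sum_fin_succ_mul_pow, sum_fin_succ_mul_pow, pow_succ'] at hx
    set a' := ∑ j : Fin w, (a j.succ : A) * t ^ (j : ℕ)
    set b' := ∑ j : Fin w, (b j.succ : A) * t ^ (j : ℕ)
    have h0 : a 0 = b 0 := by
      refine Int.eq_of_dvd_sub_of_lt_abs (ha 0) (hb 0) (hker _ ⟨t ^ w * x - (a' - b'), ?_⟩)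
      push_cast
      linear_combination hx
    have htail : t ^ w ∣ a' - b' := ⟨x, ht (by rw [h0] at hx; linear_combination hx)⟩
    have := ih (fun j => ha j.succ) (fun j => hb j.succ) htail
    exact funext (Fin.cases h0 (congrFun this))

/-- `hsurj` and `hker` say that `ℤ → A ⧸ (t)` is surjective with kernel `(N)`. -/
theorem existsUnique_digits_pow_dvd_sub (hN : N ≠ 0) (ht : IsLeftRegular t)
    (hsurj : ∀ z : A, ∃ m : ℤ, t ∣ z - m) (hker : ∀ m : ℤ, t ∣ (m : A) ↔ N ∣ m) (w : ℕ) (z : A) :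
    ∃! a : Fin w → ℤ, (∀ j, 0 ≤ a j ∧ a j < |N|) ∧ t ^ w ∣ z - ∑ j, (a j : A) * t ^ (j : ℕ) := by
  obtain ⟨a, ha, hz⟩ := exists_digits_pow_dvd_sub hN hsurj (fun m => (hker m).2) w z
  refine ⟨a, ⟨ha, hz⟩, fun b ⟨hb, hzb⟩ => ?_⟩
  refine digits_eq_of_pow_dvd_sub ht (fun m => (hker m).1) hb ha ?_
  simpa only [sub_sub_sub_cancel_left] using dvd_sub hz hzb

end Digits

theorem dvd_aeval_sub_algebraMap_coeff_zero {R A : Type*} [CommRing R] [CommRing A] [Algebra R A]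
    (t : A) (p : R[X]) : t ∣ aeval t p - algebraMap R A (p.coeff 0) := by
  simpa only [aeval_X, aeval_sub, aeval_C] using map_dvd (aeval t) (X_dvd_sub_C (p := p))

namespace Algebra

variable {R S : Type*} [CommRing R] [CommRing S] [Algebra R S]

variable (R) in
def adjoinGen (x : S) : adjoin R {x} :=
  ⟨x, self_mem_adjoin_singleton R x⟩

@[simp]
theorem coe_adjoinGen (x : S) : (adjoinGen R x : S) = x := rfl

theorem exists_aeval_adjoinGen_eq {x : S} (z : adjoin R {x}) :
    ∃ p : R[X], aeval (adjoinGen R x) p = z := by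
  obtain ⟨p, hp⟩ : (z : S) ∈ (aeval x).range := by
    rw [← adjoin_singleton_eq_range_aeval R x]; exact z.2
  exact ⟨p, Subtype.ext (by simpa [aeval_subalgebra_coe] using hp)⟩

theorem adjoinGen_dvd_sub_algebraMap {x : S} (z : adjoin R {x}) :
    ∃ m : R, adjoinGen R x ∣ z - algebraMap R _ m := by
  obtain ⟨p, rfl⟩ := exists_aeval_adjoinGen_eq z
  exact ⟨p.coeff 0, dvd_aeval_sub_algebraMap_coeff_zero _ p⟩

theorem adjoinGen_dvd_algebraMap_coeff_zero_minpoly (x : S) :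
    adjoinGen R x ∣ algebraMap R _ ((minpoly R x).coeff 0) := by
  have hroot : aeval (adjoinGen R x) (minpoly R x) = 0 :=
    Subtype.ext (by simp [aeval_subalgebra_coe])
  simpa [hroot] using dvd_aeval_sub_algebraMap_coeff_zero (adjoinGen R x) (minpoly R x)

theorem coeff_zero_minpoly_dvd_of_adjoinGen_dvd [IsDomain R] [IsIntegrallyClosed R]
    [IsDomain S] [Module.IsTorsionFree R S] {x : S} (hx : IsIntegral R x) {m : R}
    (h : adjoinGen R x ∣ algebraMap R _ m) : (minpoly R x).coeff 0 ∣ m := by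
  obtain ⟨c, hc⟩ := h
  obtain ⟨p, rfl⟩ := exists_aeval_adjoinGen_eq c
  have hroot : aeval x (X * p - C m) = 0 := by
    have := congrArg Subtype.val hc
    simp only [SubalgebraClass.coe_algebraMap, MulMemClass.coe_mul, coe_adjoinGen,
      aeval_subalgebra_coe] at this
    simp [this]
  obtain ⟨q, hq⟩ := minpoly.isIntegrallyClosed_dvd hx hroot
  refine ⟨-q.coeff 0, ?_⟩
  have := congrArg (coeff · 0) hq
  simp only [coeff_sub, mul_coeff_zero, coeff_X_zero, zero_mul, coeff_C_zero, zero_sub] at this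
  linear_combination -this

theorem adjoinGen_dvd_algebraMap_iff [IsDomain R] [IsIntegrallyClosed R]
    [IsDomain S] [Module.IsTorsionFree R S] {x : S} (hx : IsIntegral R x) (m : R) :
    adjoinGen R x ∣ algebraMap R _ m ↔ (minpoly R x).coeff 0 ∣ m :=
  ⟨coeff_zero_minpoly_dvd_of_adjoinGen_dvd hx, fun h =>
    (adjoinGen_dvd_algebraMap_coeff_zero_minpoly x).trans (map_dvd _ h)⟩

end Algebra

theorem minpoly.coeff_zero_ne_zero_of_isFractionRing {R S : Type*} (K : Type*) [CommRing R]
    [IsDomain R] [IsIntegrallyClosed R] [Field K] [Algebra R K] [IsFractionRing R K] [CommRing S]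
    [IsDomain S] [Algebra R S] [Algebra K S] [IsScalarTower R K S] {x : S} (hx : IsIntegral R x) (h : x ≠ 0) :
    (minpoly R x).coeff 0 ≠ 0 := by
  have := minpoly.coeff_zero_ne_zero (hx.tower_top (A := K)) h
  rwa [minpoly.isIntegrallyClosed_eq_field_fractions' K hx, coeff_map, ne_eq,
    map_eq_zero_iff _ (IsFractionRing.injective R K)] at this

theorem Subalgebra.dvd_iff_exists_mem {R A : Type*} [CommSemiring R] [CommSemiring A] [Algebra R A]
    {S : Subalgebra R A} {x y : S} : x ∣ y ↔ ∃ c ∈ S, (y : A) = x * c :=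
  ⟨fun ⟨c, hc⟩ => ⟨c, c.2, congrArg Subtype.val hc⟩, fun ⟨c, hc, h⟩ => ⟨⟨c, hc⟩, Subtype.ext h⟩⟩

theorem complete_residue_system_mod_tau_pow_general
    (τ : ℂ) (hint : IsIntegral ℤ τ) (hτ : 1 < ‖τ‖)
    (Nτ : ℤ) (hN : (minpoly ℤ τ).coeff 0 = (-1) ^ (minpoly ℤ τ).natDegree * Nτ)
    (w : ℕ) :
    ∀ z ∈ Algebra.adjoin ℤ ({τ} : Set ℂ),
      ∃! a : Fin w → ℤ,
        (∀ j, 0 ≤ a j ∧ a j < |Nτ|) ∧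
        ∃ x ∈ Algebra.adjoin ℤ ({τ} : Set ℂ),
          z - ∑ j : Fin w, (a j : ℂ) * τ ^ (j : ℕ) = τ ^ w * x := by
  intro z hz
  have hτ0 : τ ≠ 0 := norm_pos_iff.1 (one_pos.trans hτ)
  have hNτ : Nτ ≠ 0 := by
    have := minpoly.coeff_zero_ne_zero_of_isFractionRing ℚ hint hτ0
    rw [hN] at this
    exact right_ne_zero_of_mul this
  have hker (m : ℤ) : Algebra.adjoinGen ℤ τ ∣ (m : Algebra.adjoin ℤ {τ}) ↔ Nτ ∣ m := by
    rw [← (isUnit_neg_one.pow (minpoly ℤ τ).natDegree).mul_left_dvd (b := m), ← hN,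
      ← Algebra.adjoinGen_dvd_algebraMap_iff hint, algebraMap_int_eq, eq_intCast]
  have ht : IsLeftRegular (Algebra.adjoinGen ℤ τ) :=
    (IsRegular.of_ne_zero fun h => hτ0 (congrArg Subtype.val h)).left
  have hsurj (y : Algebra.adjoin ℤ {τ}) : ∃ m : ℤ, Algebra.adjoinGen ℤ τ ∣ y - m := by
    simpa using Algebra.adjoinGen_dvd_sub_algebraMap y
  refine (existsUnique_congr fun a => ?_).1
    (existsUnique_digits_pow_dvd_sub hNτ ht hsurj hker w ⟨z, hz⟩)
  rw [Subalgebra.dvd_iff_exists_mem]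
  push_cast
  rfl

/-- **Complete residue system.** Let `τ` be an algebraic integer with norm `Nτ` and `w ≥ 1`.
The sums `∑_{j<w} a_j τ^j` with `a_j ∈ {0, …, |Nτ|-1}` form a complete residue system
modulo `τ^w` in `ℤ[τ]`: every `z ∈ ℤ[τ]` is congruent modulo `τ^w` to exactly one such sum.
In particular there are exactly `|Nτ|^w` residue classes modulo `τ^w` in `ℤ[τ]`. -/
theorem complete_residue_system_mod_tau_pow
    (τ : ℂ) (hint : IsIntegral ℤ τ) (hτ : 1 < ‖τ‖)
    (Nτ : ℤ) (hN : (minpoly ℤ τ).coeff 0 = (-1) ^ (minpoly ℤ τ).natDegree * Nτ)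
    (w : ℕ) (hw : 1 ≤ w) :
    ∀ z ∈ Algebra.adjoin ℤ ({τ} : Set ℂ),
      ∃! a : Fin w → ℤ,
        (∀ j, 0 ≤ a j ∧ a j < |Nτ|) ∧
        ∃ x ∈ Algebra.adjoin ℤ ({τ} : Set ℂ),
          z - ∑ j : Fin w, (a j : ℂ) * τ ^ (j : ℕ) = τ ^ w * x :=
  complete_residue_system_mod_tau_pow_general τ hint hτ Nτ hN w
end

section
/- Let t ≥ 2 be a real number and w ≥ 2 an integer, and consider the polynomial f(z) = 1 − (1/t)z − (1 − 1/t)z^w. Then f has exactly one complex root z with |z| ≤ 1 + 1/(t w^3), namely z = 1. -/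
/-!
With `a = 1/t`, a root is a solution of the convex combination `a z + (1 - a) z ^ w = 1`,
which forces `‖z‖ ≥ 1`. Comparing real parts and using `‖z‖ ^ w ≤ (1 + a/w³) ^ w ≤ 1 + 2a/w²`
gives `1 - cos θ ≤ 2/w²` for `θ = arg z`, hence `|θ| ≤ π/w` by Jordan's inequality. In that range
`sin θ` and `sin (w θ)` have the same sign, so the imaginary part vanishes only if `θ = 0`;
then `z = ‖z‖` is a real number `≥ 1` and the convex combination forces `z = 1`.
-/

open Real Complex

theorem one_add_pow_le_one_add_two_mul {ε : ℝ} (hε : 0 ≤ ε) :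
    ∀ {n : ℕ}, 2 * n * ε ≤ 1 → (1 + ε) ^ n ≤ 1 + 2 * n * ε
  | 0, _ => by simp
  | n + 1, h => by
    push_cast at h ⊢
    have ih := one_add_pow_le_one_add_two_mul hε (n := n) (by linarith)
    rw [pow_succ]
    nlinarith [pow_nonneg (by linarith : (0 : ℝ) ≤ 1 + ε) n]

theorem Complex.im_pow_eq_norm_pow_mul_sin (z : ℂ) (n : ℕ) :
    (z ^ n).im = ‖z‖ ^ n * Real.sin (n * arg z) := by
  conv_lhs => rw [← norm_mul_exp_arg_mul_I z, mul_pow, ← exp_nat_mul]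
  rw [← ofReal_pow, show (n : ℂ) * (arg z * I) = (n * arg z : ℝ) * I by push_cast; ring,
    im_ofReal_mul, exp_ofReal_mul_I_im]

theorem Real.abs_le_pi_div_of_one_sub_cos_le {θ c : ℝ} (hc : 0 < c) (hθ : |θ| ≤ π)
    (h : 1 - Real.cos θ ≤ 2 / c ^ 2) : |θ| ≤ π / c := by
  have hjordan := cos_le_one_sub_mul_cos_sq hθ
  refine abs_le_of_sq_le_sq ?_ (by positivity)
  have hsq : 2 / π ^ 2 * θ ^ 2 ≤ 2 / π ^ 2 * (π / c) ^ 2 := calc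
    _ ≤ 2 / c ^ 2 := by linarith
    _ = _ := by field_simp
  exact le_of_mul_le_mul_left hsq (by positivity)

theorem Real.sin_mul_sin_nat_mul_nonneg {θ : ℝ} {n : ℕ} (h : |θ| ≤ π / n) :
    0 ≤ Real.sin θ * Real.sin (n * θ) := by
  wlog hθ : 0 ≤ θ generalizing θ
  · simpa using this (θ := -θ) (by rwa [abs_neg]) (by linarith)
  rw [abs_of_nonneg hθ] at h
  rcases n.eq_zero_or_pos with rfl | hn
  · simp
  have hnθ : n * θ ≤ π := by rwa [le_div_iff₀' (by positivity)] at h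
  have hθπ : θ ≤ π := h.trans (div_le_self pi_nonneg (by exact_mod_cast hn))
  exact mul_nonneg (sin_nonneg_of_nonneg_of_le_pi hθ hθπ)
    (sin_nonneg_of_nonneg_of_le_pi (by positivity) hnθ)

section ConvexCombination

variable {a b : ℝ} {w : ℕ} {z : ℂ}

theorem one_le_norm_of_mul_add_mul_pow_eq_one (ha : 0 ≤ a) (hb : 0 ≤ b) (hab : a + b = 1)
    (hw : w ≠ 0) (hz : (a : ℂ) * z + b * z ^ w = 1) : 1 ≤ ‖z‖ := by
  by_contra! hlt
  have : ‖(a : ℂ) * z + b * z ^ w‖ < 1 := calc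
    _ ≤ a * ‖z‖ + b * ‖z‖ ^ w := by
      simpa [norm_mul, norm_pow, abs_of_nonneg ha, abs_of_nonneg hb] using
        norm_add_le ((a : ℂ) * z) (b * z ^ w)
    _ ≤ a * ‖z‖ + b * ‖z‖ := by gcongr; exact pow_le_of_le_one (norm_nonneg z) hlt.le hw
    _ < 1 := by nlinarith
  simp [hz] at this

theorem mul_one_sub_cos_arg_le (ha : 0 ≤ a) (hb : 0 ≤ b) (hab : a + b = 1) (hw : w ≠ 0)
    (hz : (a : ℂ) * z + b * z ^ w = 1) : a * (1 - Real.cos (arg z)) ≤ ‖z‖ ^ w - 1 := by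
  have hr := one_le_norm_of_mul_add_mul_pow_eq_one ha hb hab hw hz
  have hre : a * z.re + b * (z ^ w).re = 1 := by
    simpa using congrArg re hz
  have hrew : (z ^ w).re ≤ ‖z‖ ^ w := (re_le_norm _).trans (norm_pow z w).le
  have hrw : ‖z‖ ≤ ‖z‖ ^ w := le_self_pow₀ hr hw
  rw [← norm_mul_cos_arg] at hre
  nlinarith [cos_le_one (arg z)]

theorem one_sub_cos_arg_le_two_div_sq (ha : 0 < a) (hb : 0 ≤ b) (hab : a + b = 1) (hw : 2 ≤ w)
    (hz : (a : ℂ) * z + b * z ^ w = 1) (hnorm : ‖z‖ ≤ 1 + a / w ^ 3) :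
    1 - Real.cos (arg z) ≤ 2 / w ^ 2 := by
  have hwR : (2 : ℝ) ≤ w := by exact_mod_cast hw
  have hsmall : 2 * w * (a / w ^ 3) ≤ 1 := by
    rw [show 2 * (w : ℝ) * (a / w ^ 3) = 2 * a / w ^ 2 by field_simp, div_le_one (by positivity)]
    nlinarith
  have hpow : ‖z‖ ^ w ≤ 1 + 2 * w * (a / w ^ 3) :=
    (pow_le_pow_left₀ (norm_nonneg z) hnorm w).trans
      (one_add_pow_le_one_add_two_mul (by positivity) hsmall)
  have hbound : a * (1 - Real.cos (arg z)) ≤ a * (2 / w ^ 2) := calc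
    _ ≤ ‖z‖ ^ w - 1 := mul_one_sub_cos_arg_le ha.le hb hab (by omega) hz
    _ ≤ 2 * w * (a / w ^ 3) := by linarith
    _ = a * (2 / w ^ 2) := by field_simp
  exact le_of_mul_le_mul_left hbound ha

theorem sin_arg_eq_zero_of_abs_arg_le (ha : 0 < a) (hb : 0 ≤ b) (hz0 : z ≠ 0)
    (hθ : |arg z| ≤ π / w) (hz : (a : ℂ) * z + b * z ^ w = 1) : Real.sin (arg z) = 0 := by
  have him : a * z.im + b * (z ^ w).im = 0 := by simpa using congrArg im hz
  rw [← norm_mul_sin_arg, im_pow_eq_norm_pow_mul_sin] at him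
  have hsame := mul_nonneg (mul_nonneg hb (pow_nonneg (norm_nonneg z) w))
    (sin_mul_sin_nat_mul_nonneg hθ)
  have hsq : a * ‖z‖ * Real.sin (arg z) ^ 2 ≤ 0 := by
    linear_combination Real.sin (arg z) * him + hsame
  have hpos : 0 < a * ‖z‖ := mul_pos ha (norm_pos_iff.mpr hz0)
  exact pow_eq_zero_iff two_ne_zero |>.mp <|
    le_antisymm (nonpos_of_mul_nonpos_right hsq hpos) (sq_nonneg _)

theorem eq_one_of_mul_add_mul_pow_eq_one (ha : 0 < a) (hb : 0 ≤ b) (hab : a + b = 1)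
    (hw : 2 ≤ w) (hz : (a : ℂ) * z + b * z ^ w = 1) (hnorm : ‖z‖ ≤ 1 + a / w ^ 3) :
    z = 1 := by
  have hw0 : w ≠ 0 := by omega
  have hr := one_le_norm_of_mul_add_mul_pow_eq_one ha.le hb hab hw0 hz
  have hθ : |arg z| ≤ π / w := abs_le_pi_div_of_one_sub_cos_le (by positivity)
    (abs_arg_le_pi z) (one_sub_cos_arg_le_two_div_sq ha hb hab hw hz hnorm)
  have harg : arg z = 0 := by
    have hπw : π / w < π := div_lt_self pi_pos (by exact_mod_cast hw)
    obtain ⟨hlo, hhi⟩ := abs_le.mp hθ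
    have hz0 : z ≠ 0 := norm_pos_iff.mp (zero_lt_one.trans_le hr)
    exact (sin_eq_zero_iff_of_lt_of_lt (by linarith) (by linarith)).mp
      (sin_arg_eq_zero_of_abs_arg_le ha hb hz0 hθ hz)
  have hzr : z = (‖z‖ : ℂ) := by
    simpa [harg] using (norm_mul_exp_arg_mul_I z).symm
  rw [hzr] at hz ⊢
  have hreal : a * ‖z‖ + b * ‖z‖ ^ w = 1 := by exact_mod_cast hz
  have hrw : ‖z‖ ≤ ‖z‖ ^ w := le_self_pow₀ hr hw0
  have hr1 : ‖z‖ = 1 := by nlinarith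
  simp [hr1]

end ConvexCombination

/-- Let `t ≥ 2` be real and `w ≥ 2` an integer, and let
`f(z) = 1 - (1/t) z - (1 - 1/t) z^w`. Then `f` has exactly one complex root `z` with
`|z| ≤ 1 + 1/(t w³)`, namely `z = 1`. -/
theorem unique_root_in_disc (t : ℝ) (ht : 2 ≤ t) (w : ℕ) (hw : 2 ≤ w) :
    {z : ℂ | 1 - (1 / (t : ℂ)) * z - (1 - 1 / (t : ℂ)) * z ^ w = 0 ∧
      ‖z‖ ≤ 1 + 1 / (t * (w : ℝ) ^ 3)} = {1} := by
  have ht0 : 0 < t := by linarith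
  ext z
  simp only [Set.mem_ofPred_eq, Set.mem_singleton_iff]
  constructor
  · rintro ⟨hroot, hnorm⟩
    refine eq_one_of_mul_add_mul_pow_eq_one (a := 1 / t) (b := 1 - 1 / t) (by positivity)
      ?_ (by ring) hw ?_ (by rwa [div_div])
    · rw [sub_nonneg, div_le_one ht0]; linarith
    · push_cast; linear_combination -hroot
  · rintro rfl
    refine ⟨by ring, ?_⟩
    rw [norm_one, le_add_iff_nonneg_right]
    positivity
end

section
/- Let τ be an imaginary quadratic algebraic integer and let V = {z ∈ C : |z| ≤ |z − y| for all y ∈ Z[τ]} be the Voronoi cell of 0 for the lattice Z[τ]. Then the closed disc of radius 1/2 around 0 is contained in V, and V is contained in the closed disc of radius |τ|·√(7/12) around 0. -/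
/-!
Writing `τ = x + iy`, the relation gives `2x = p`, `x² + y² = q` and `y ≠ 0`, so
`|a + bτ|² = a² + abp + b²q` is a positive integer for every nonzero lattice point; hence
lattice points other than `0` have norm at least `1`, which gives the inner disc. For the
outer disc, rounding `Im z / y` to `b` and then `Re z - bx` to `a` yields a lattice point
`w = a + bτ` with `|z - w|² ≤ 1/4 + y²/4 ≤ |τ|²/4 + |τ|²/4 ≤ 7|τ|²/12`, using `1 ≤ |τ|`.
-/

open Complex

section QuadraticRoot

variable {p q : ℤ} {τ : ℂ}

theorem re_im_eqs_of_root (hτ : τ ^ 2 - p * τ + q = 0) :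
    τ.re ^ 2 - τ.im ^ 2 - p * τ.re + q = 0 ∧ τ.im * (2 * τ.re - p) = 0 := by
  have hre := congrArg re hτ
  have him := congrArg im hτ
  simp only [sub_re, add_re, sub_im, add_im, sq, mul_re, mul_im, intCast_re, intCast_im,
    zero_re, zero_im] at hre him
  exact ⟨by linear_combination hre, by linear_combination him⟩

theorem im_ne_zero_of_root (hτ : τ ^ 2 - p * τ + q = 0) (hdisc : p ^ 2 < 4 * q) : τ.im ≠ 0 := by
  intro him
  have hre := (re_im_eqs_of_root hτ).1
  have hdisc' : (p : ℝ) ^ 2 < 4 * q := by exact_mod_cast hdisc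
  rw [him] at hre
  nlinarith [sq_nonneg (2 * τ.re - p)]

theorem two_mul_re_of_root (hτ : τ ^ 2 - p * τ + q = 0) (hdisc : p ^ 2 < 4 * q) :
    2 * τ.re = p := by
  rcases mul_eq_zero.1 (re_im_eqs_of_root hτ).2 with him | hre
  · exact absurd him (im_ne_zero_of_root hτ hdisc)
  · linarith

theorem normSq_of_root (hτ : τ ^ 2 - p * τ + q = 0) (hdisc : p ^ 2 < 4 * q) :
    normSq τ = q := by
  rw [normSq_apply]
  linear_combination -(re_im_eqs_of_root hτ).1 + τ.re * two_mul_re_of_root hτ hdisc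

theorem normSq_intCast_add_mul_of_root (hτ : τ ^ 2 - p * τ + q = 0) (hdisc : p ^ 2 < 4 * q)
    (a b : ℤ) : normSq ((a : ℂ) + b * τ) = ((a ^ 2 + a * b * p + b ^ 2 * q : ℤ) : ℝ) := by
  have hnorm := normSq_of_root hτ hdisc
  rw [normSq_apply] at hnorm ⊢
  simp only [add_re, add_im, mul_re, mul_im, intCast_re, intCast_im, zero_mul, sub_zero,
    zero_add, Int.cast_add, Int.cast_mul, Int.cast_pow]
  linear_combination (a : ℝ) * b * two_mul_re_of_root hτ hdisc + (b : ℝ) ^ 2 * hnorm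

theorem one_le_norm_intCast_add_mul_of_root (hτ : τ ^ 2 - p * τ + q = 0)
    (hdisc : p ^ 2 < 4 * q) (a b : ℤ) (hw : (a : ℂ) + b * τ ≠ 0) :
    1 ≤ ‖(a : ℂ) + b * τ‖ := by
  have hpos := normSq_pos.2 hw
  rw [normSq_intCast_add_mul_of_root hτ hdisc, Int.cast_pos] at hpos
  rw [← one_le_sq_iff₀ (norm_nonneg _), Complex.sq_norm, normSq_intCast_add_mul_of_root hτ hdisc]
  exact_mod_cast hpos

end QuadraticRoot

def voronoiCell (τ : ℂ) : Set ℂ := {z : ℂ | ∀ a b : ℤ, ‖z‖ ≤ ‖z - ((a : ℂ) + (b : ℂ) * τ)‖}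

theorem norm_le_norm_sub_of_two_mul_norm_le {E : Type*} [SeminormedAddCommGroup E] {z w : E}
    (h : 2 * ‖z‖ ≤ ‖w‖) : ‖z‖ ≤ ‖z - w‖ := by
  have := norm_sub_norm_le w z
  rw [norm_sub_rev] at this
  linarith

theorem sq_sub_round_le (x : ℝ) : (x - round x) ^ 2 ≤ 1 / 4 := by
  have h := abs_sub_round x
  nlinarith [abs_nonneg (x - round x), sq_abs (x - round x)]

namespace voronoiCell

theorem closedBall_half_subset {τ : ℂ}
    (hmin : ∀ a b : ℤ, (a : ℂ) + b * τ ≠ 0 → 1 ≤ ‖(a : ℂ) + b * τ‖) :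
    Metric.closedBall 0 (1 / 2) ⊆ voronoiCell τ := by
  intro z hz a b
  rw [mem_closedBall_zero_iff] at hz
  by_cases hw : (a : ℂ) + b * τ = 0
  · rw [hw, sub_zero]
  · exact norm_le_norm_sub_of_two_mul_norm_le (by linarith [hmin a b hw])

theorem exists_normSq_sub_le {τ : ℂ} (hτ : τ.im ≠ 0) (z : ℂ) :
    ∃ a b : ℤ, normSq (z - ((a : ℂ) + b * τ)) ≤ 1 / 4 + τ.im ^ 2 / 4 := by
  set b := round (z.im / τ.im) with hb
  set a := round (z.re - b * τ.re) with ha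
  refine ⟨a, b, ?_⟩
  have hre : (z - ((a : ℂ) + b * τ)).re = z.re - b * τ.re - a := by
    simp only [sub_re, add_re, intCast_re, mul_re, intCast_im, zero_mul, sub_zero]
    ring
  have him : (z - ((a : ℂ) + b * τ)).im = τ.im * (z.im / τ.im - b) := by
    simp only [sub_im, add_im, intCast_im, mul_im, intCast_re, zero_mul, add_zero,
      zero_add]
    field_simp
  rw [normSq_apply, hre, him, ha, hb, ← sq, ← sq, mul_pow]
  nlinarith [sq_sub_round_le (z.re - b * τ.re), sq_sub_round_le (z.im / τ.im), sq_nonneg τ.im]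

theorem subset_closedBall {τ : ℂ} (him : τ.im ≠ 0) (hτ : 1 ≤ ‖τ‖) :
    voronoiCell τ ⊆ Metric.closedBall 0 (‖τ‖ * √(7 / 12)) := by
  intro z hz
  obtain ⟨a, b, hab⟩ := exists_normSq_sub_le him z
  have him_le : τ.im ^ 2 ≤ ‖τ‖ ^ 2 := by
    rw [← sq_abs]
    exact pow_le_pow_left₀ (abs_nonneg _) (abs_im_le_norm τ) 2
  have hz_sq : ‖z‖ ^ 2 ≤ (‖τ‖ * √(7 / 12)) ^ 2 := by
    rw [mul_pow, Real.sq_sqrt (by norm_num)]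
    calc ‖z‖ ^ 2 ≤ ‖z - ((a : ℂ) + b * τ)‖ ^ 2 := pow_le_pow_left₀ (norm_nonneg _) (hz a b) 2
      _ ≤ 1 / 4 + τ.im ^ 2 / 4 := by rwa [Complex.sq_norm]
      _ ≤ ‖τ‖ ^ 2 * (7 / 12) := by nlinarith
  rw [mem_closedBall_zero_iff]
  exact (pow_le_pow_iff_left₀ (norm_nonneg _) (by positivity) two_ne_zero).mp hz_sq

end voronoiCell

/-- Let `τ` be an imaginary quadratic algebraic integer and let
`V = {z ∈ ℂ : |z| ≤ |z - y| for all y ∈ ℤ[τ]}` be the Voronoi cell of `0` for the lattice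
`ℤ[τ] = ℤ + ℤτ`. Then the closed disc of radius `1/2` around `0` is contained in `V`,
and `V` is contained in the closed disc of radius `|τ|·√(7/12)` around `0`. -/
theorem voronoi_cell_bounds (p q : ℤ) (τ : ℂ)
    (hτ : τ ^ 2 - (p : ℂ) * τ + (q : ℂ) = 0) (hdisc : p ^ 2 < 4 * q) :
    Metric.closedBall (0 : ℂ) (1 / 2) ⊆
      {z : ℂ | ∀ a b : ℤ, ‖z‖ ≤ ‖z - ((a : ℂ) + (b : ℂ) * τ)‖} ∧
    {z : ℂ | ∀ a b : ℤ, ‖z‖ ≤ ‖z - ((a : ℂ) + (b : ℂ) * τ)‖} ⊆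
      Metric.closedBall (0 : ℂ) (‖τ‖ * Real.sqrt (7 / 12)) := by
  have him := im_ne_zero_of_root hτ hdisc
  have hτ_ne : τ ≠ 0 := fun h ↦ him (by rw [h, zero_im])
  have hτ_norm : 1 ≤ ‖τ‖ := by
    simpa using one_le_norm_intCast_add_mul_of_root hτ hdisc 0 1 (by simpa using hτ_ne)
  exact ⟨voronoiCell.closedBall_half_subset (one_le_norm_intCast_add_mul_of_root hτ hdisc),
    voronoiCell.subset_closedBall him hτ_norm⟩
end

section
/- Let τ ∈ C with |τ| > 1, D a finite digit set containing 0, and w ≥ 2. For each ℓ ≥ 0, the set of w-NAFs with left-length at most ℓ and infinite right-length, equipped with the metric d(η, ξ) = |τ|^{max{j : η_j ≠ ξ_j}}, is a compact metric space. -/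
open scoped Classical

/-- The metric on `w`-NAF sequences: `d(η, ξ) = |τ| ^ (max {j : η_j ≠ ξ_j})` for `η ≠ ξ`,
and `0` otherwise. -/
noncomputable def nafDist (τ : ℂ) (η ξ : ℤ → ℂ) : ℝ :=
  if η = ξ then 0 else ‖τ‖ ^ (sSup {j : ℤ | η j ≠ ξ j})

/-!
The `w`-NAFs with digits in the finite set `D` and left-length at most `ℓ` form a closed subset
of the compact product `D ^ ℤ`, so every sequence of them has a pointwise convergent
subsequence; since `D` is finite, pointwise convergence means that each digit is eventually
constant. As all digits at positions `≥ ℓ` vanish, the subsequence eventually agrees with its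
limit on every window `(k, ∞)`, which is exactly convergence for `nafDist`, because
`|τ| ^ k → 0` as `k → -∞`.
-/

open Filter Topology Set

section NafSet

variable {α : Type*} [Zero α]

def nafSet (D : Set α) (w ℓ : ℕ) : Set (ℤ → α) :=
  {η | (∀ j, η j ∈ D) ∧ (∀ j : ℤ, (ℓ : ℤ) ≤ j → η j = 0) ∧
    (∀ i j : ℤ, i < j → j < i + w → η i ≠ 0 → η j = 0)}

variable [TopologicalSpace α] [T1Space α]

theorem isClosed_nafSet {D : Set α} (hD : IsClosed D) (w ℓ : ℕ) : IsClosed (nafSet D w ℓ) := by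
  have hzero : ∀ j : ℤ, IsClosed {η : ℤ → α | η j = 0} := fun j =>
    isClosed_singleton.preimage (continuous_apply j)
  change IsClosed ({η : ℤ → α | ∀ j, η j ∈ D} ∩ ({η | ∀ j : ℤ, (ℓ : ℤ) ≤ j → η j = 0} ∩
    {η | ∀ i j : ℤ, i < j → j < i + w → η i ≠ 0 → η j = 0}))
  simp only [ofPred_forall]
  refine (isClosed_iInter fun j => hD.preimage (continuous_apply j)).inter
    ((isClosed_iInter fun j => isClosed_iInter fun _ => hzero j).inter ?_)
  exact isClosed_iInter fun i => isClosed_iInter fun j => isClosed_iInter fun _ =>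
    isClosed_iInter fun _ => isClosed_imp (hzero i).isOpen_compl (hzero j)

theorem isCompact_nafSet {D : Set α} (hD : D.Finite) (w ℓ : ℕ) : IsCompact (nafSet D w ℓ) :=
  (isCompact_univ_pi fun _ => hD.isCompact).of_isClosed_subset (isClosed_nafSet hD.isClosed w ℓ)
    fun _ hη j _ => hη.1 j

end NafSet

theorem Filter.Tendsto.eventually_eq_of_mem_finite {ι X : Type*} [TopologicalSpace X] [T1Space X]
    {l : Filter ι} {f : ι → X} {a : X} {D : Set X} (hD : D.Finite) (hf : ∀ i, f i ∈ D)
    (hlim : Tendsto f l (𝓝 a)) : ∀ᶠ i in l, f i = a := by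
  have hopen : IsOpen (D \ {a})ᶜ := (hD.subset sdiff_subset).isClosed.isOpen_compl
  filter_upwards [hlim.eventually (hopen.mem_nhds (by simp))] with i hi
  by_contra hne
  exact hi ⟨hf i, hne⟩

theorem eventually_forall_gt_eq_of_forall_ge_eq_zero {ι α : Type*} [Zero α] {l : Filter ι}
    {u : ι → ℤ → α} {η : ℤ → α} {ℓ : ℤ} (hu : ∀ n j, ℓ ≤ j → u n j = 0)
    (hη : ∀ j, ℓ ≤ j → η j = 0) (h : ∀ j, ∀ᶠ n in l, u n j = η j) (k : ℤ) :
    ∀ᶠ n in l, ∀ j, k < j → u n j = η j := by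
  filter_upwards [(finite_Ioo k ℓ).eventually_all.2 fun j _ => h j] with n hn j hkj
  by_cases hjℓ : j < ℓ
  · exact hn j ⟨hkj, hjℓ⟩
  · rw [hu n j (not_lt.1 hjℓ), hη j (not_lt.1 hjℓ)]

theorem nafDist_nonneg (τ : ℂ) (η ξ : ℤ → ℂ) : 0 ≤ nafDist τ η ξ := by
  unfold nafDist
  split_ifs
  exacts [le_rfl, zpow_nonneg (norm_nonneg τ) _]

theorem nafDist_le_zpow {τ : ℂ} (hτ : 1 ≤ ‖τ‖) {η ξ : ℤ → ℂ} {k : ℤ}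
    (h : ∀ j, k < j → η j = ξ j) : nafDist τ η ξ ≤ ‖τ‖ ^ k := by
  unfold nafDist
  split_ifs with heq
  · exact zpow_nonneg (norm_nonneg τ) k
  · obtain ⟨j, hj⟩ := Function.ne_iff.1 heq
    refine zpow_le_zpow_right₀ hτ (csSup_le ⟨j, hj⟩ fun i hi => ?_)
    exact not_lt.1 fun hki => hi (h i hki)

theorem tendsto_nafDist_zero {ι : Type*} {l : Filter ι} {τ : ℂ} (hτ : 1 < ‖τ‖)
    {u : ι → ℤ → ℂ} {η : ℤ → ℂ} (h : ∀ k : ℤ, ∀ᶠ n in l, ∀ j, k < j → u n j = η j) :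
    Tendsto (fun n => nafDist τ (u n) η) l (𝓝 0) := by
  refine tendsto_order.2 ⟨fun a ha => Eventually.of_forall fun n =>
    ha.trans_le (nafDist_nonneg τ _ _), fun ε hε => ?_⟩
  obtain ⟨k, hk, -⟩ := exists_mem_Ioc_zpow hε hτ
  filter_upwards [h k] with n hn
  exact (nafDist_le_zpow hτ.le hn).trans_lt hk

theorem naf_space_compact_general (τ : ℂ) (habs : 1 < ‖τ‖)
    (D : Finset ℂ) (w : ℕ) (ℓ : ℕ) :
    ∀ u : ℕ → ℤ → ℂ,
      (∀ n, (∀ j, u n j ∈ D) ∧ (∀ j : ℤ, (ℓ : ℤ) ≤ j → u n j = 0) ∧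
        (∀ i j : ℤ, i < j → j < i + w → u n i ≠ 0 → u n j = 0)) →
      ∃ η : ℤ → ℂ,
        ((∀ j, η j ∈ D) ∧ (∀ j : ℤ, (ℓ : ℤ) ≤ j → η j = 0) ∧
          (∀ i j : ℤ, i < j → j < i + w → η i ≠ 0 → η j = 0)) ∧
        ∃ φ : ℕ → ℕ, StrictMono φ ∧
          Filter.Tendsto (fun n => nafDist τ (u (φ n)) η) Filter.atTop (nhds 0) := by
  intro u hu
  obtain ⟨η, hη, φ, hφ, hlim⟩ :=
    (isCompact_nafSet (D : Set ℂ).toFinite w ℓ).isSeqCompact (x := u) hu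
  have hdigits : ∀ j, ∀ᶠ n in atTop, u (φ n) j = η j := fun j =>
    (tendsto_pi_nhds.1 hlim j).eventually_eq_of_mem_finite (D : Set ℂ).toFinite
      fun n => (hu (φ n)).1 j
  exact ⟨η, hη, φ, hφ, tendsto_nafDist_zero habs
    (eventually_forall_gt_eq_of_forall_ge_eq_zero (fun n => (hu (φ n)).2.1) hη.2.1 hdigits)⟩

/-- Let `τ ∈ ℂ` with `|τ| > 1`, `D` a finite digit set containing `0`, and `w ≥ 2`.
For each `ℓ ≥ 0`, the set of `w`-NAFs of left-length at most `ℓ` (and arbitrary, possibly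
infinite, right-length), equipped with the metric `nafDist`, is a compact metric space:
every sequence of such `w`-NAFs has a subsequence converging (in the metric) to a `w`-NAF
of the same kind. -/
theorem naf_space_compact (τ : ℂ) (habs : 1 < ‖τ‖)
    (D : Finset ℂ) (hD0 : (0 : ℂ) ∈ D) (w : ℕ) (hw : 2 ≤ w) (ℓ : ℕ) :
    ∀ u : ℕ → ℤ → ℂ,
      (∀ n, (∀ j, u n j ∈ D) ∧ (∀ j : ℤ, (ℓ : ℤ) ≤ j → u n j = 0) ∧
        (∀ i j : ℤ, i < j → j < i + w → u n i ≠ 0 → u n j = 0)) →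
      ∃ η : ℤ → ℂ,
        ((∀ j, η j ∈ D) ∧ (∀ j : ℤ, (ℓ : ℤ) ≤ j → η j = 0) ∧
          (∀ i j : ℤ, i < j → j < i + w → η i ≠ 0 → η j = 0)) ∧
        ∃ φ : ℕ → ℕ, StrictMono φ ∧
          Filter.Tendsto (fun n => nafDist τ (u (φ n)) η) Filter.atTop (nhds 0) :=
  naf_space_compact_general τ habs D w ℓ
end

section
/- Let τ be an imaginary quadratic algebraic integer with |τ| > 1, w ≥ 2, and D a minimal norm representatives digit set modulo τ^w. Then there exists a constant f_L > 0 (depending only on τ and w) such that every fractional w-NAF 0.η_{-1}η_{-2}... with η_{-1} ≠ 0 satisfies |Σ_{j≥1} η_{-j}τ^{-j}| ≥ |τ|^{-1} f_L. -/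
/-- `D` is a reduced residue digit set modulo `τ^w`. -/
def IsReducedResidueDigitSet (τ : ℂ) (w : ℕ) (D : Finset ℂ) : Prop :=
  (0 : ℂ) ∈ D ∧
  (∀ d ∈ D, d ∈ Algebra.adjoin ℤ ({τ} : Set ℂ)) ∧
  (∀ d ∈ D, d ≠ 0 → ¬ ∃ x ∈ Algebra.adjoin ℤ ({τ} : Set ℂ), d = τ * x) ∧
  (∀ d₁ ∈ D, ∀ d₂ ∈ D, d₁ ≠ 0 → d₂ ≠ 0 →
    (∃ x ∈ Algebra.adjoin ℤ ({τ} : Set ℂ), d₁ - d₂ = τ ^ w * x) → d₁ = d₂) ∧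
  (∀ z ∈ Algebra.adjoin ℤ ({τ} : Set ℂ),
    (¬ ∃ x ∈ Algebra.adjoin ℤ ({τ} : Set ℂ), z = τ * x) →
    ∃ d ∈ D, ∃ x ∈ Algebra.adjoin ℤ ({τ} : Set ℂ), z - d = τ ^ w * x)

/-- `D` is a minimal norm representatives digit set modulo `τ^w`: a reduced residue digit
set in which every nonzero digit has minimal absolute value (equivalently, minimal norm)
within its residue class modulo `τ^w`. -/
def IsMinimalNormDigitSet (τ : ℂ) (w : ℕ) (D : Finset ℂ) : Prop :=
  IsReducedResidueDigitSet τ w D ∧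
  ∀ d ∈ D, d ≠ 0 → ∀ ξ ∈ Algebra.adjoin ℤ ({τ} : Set ℂ),
    (∃ x ∈ Algebra.adjoin ℤ ({τ} : Set ℂ), ξ - d = τ ^ w * x) →
    ‖d‖ ≤ ‖ξ‖

/-!
If a fractional `w`-NAF had value `0`, let `m` be the position of a digit of maximal norm `B`.
Multiplying by `τ^m`, the part of the expansion down to position `m` is an element of `ℤ[τ]`
congruent to that digit modulo `τ^w`, so by minimality its norm is at least `B`; it is the
negative of the remaining tail, whose norm is at most `B / (|τ|^w - 1)` because nonzero digits
are `w` apart. Since `|τ|² = q ≥ 2`, this forces `|τ|^w = 2`, i.e. `w = q = 2`, and then equality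
in every estimate yields nonzero digits with `τ² d₀ = 2 d₁`, `τ² d₁ = 2 d₂`, which no reduced
residue digit set admits. So the value never vanishes; as the `w`-NAFs form a compact set of
sequences on which the value is continuous, its norm is bounded away from `0`.
-/

open Finset
open scoped Algebra

section Quadratic

variable {p q : ℤ} {τ : ℂ}

theorem normSq_eq_of_quadratic (hτ : τ ^ 2 - p * τ + q = 0) (hdisc : p ^ 2 < 4 * q) :
    Complex.normSq τ = q := by
  have hre := congrArg Complex.re hτ
  have him := congrArg Complex.im hτ
  simp only [sq, Complex.add_re, Complex.sub_re, Complex.mul_re, Complex.intCast_re,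
    Complex.intCast_im, Complex.add_im, Complex.sub_im, Complex.mul_im, Complex.zero_re,
    Complex.zero_im] at hre him
  have hdisc' : (p : ℝ) ^ 2 < 4 * q := by exact_mod_cast hdisc
  have hy : τ.im ≠ 0 := by
    rintro hy
    rw [hy] at hre
    nlinarith [sq_nonneg (2 * τ.re - p)]
  have hx : 2 * τ.re = p := by
    apply mul_left_cancel₀ hy
    linear_combination him
  rw [Complex.normSq_apply]
  linear_combination -hre + τ.re * hx

theorem eq_two_of_norm_pow_le_two (hτ : τ ^ 2 - p * τ + q = 0) (hdisc : p ^ 2 < 4 * q)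
    (habs : 1 < ‖τ‖) {w : ℕ} (hw : 2 ≤ w) (h : ‖τ‖ ^ w ≤ 2) : w = 2 ∧ q = 2 := by
  have hsq : ‖τ‖ ^ 2 = q := by rw [Complex.sq_norm, normSq_eq_of_quadratic hτ hdisc]
  have hq : (2 : ℝ) ≤ q := by
    have : (1 : ℝ) < q := hsq ▸ one_lt_pow₀ habs two_ne_zero
    exact_mod_cast (show (1 : ℤ) < q by exact_mod_cast this)
  have hw2 : w = 2 := by
    by_contra hne
    have : ‖τ‖ ^ 2 < ‖τ‖ ^ w := pow_lt_pow_right₀ habs (by omega)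
    linarith
  subst hw2
  exact ⟨rfl, by exact_mod_cast le_antisymm (hsq ▸ h) hq⟩

end Quadratic

def IsNAF {M : Type*} [Zero M] (w : ℕ) (a : ℕ → M) : Prop :=
  ∀ i j, i < j → j < i + w → a i ≠ 0 → a j = 0

namespace IsNAF

variable {M : Type*} [Zero M] {w : ℕ} {a : ℕ → M}

theorem add_le (h : IsNAF w a) {i j : ℕ} (hij : i < j) (hi : a i ≠ 0) (hj : a j ≠ 0) :
    i + w ≤ j := by
  by_contra! hlt
  exact hj (h i j hij hlt hi)

theorem comp_add (h : IsNAF w a) (k : ℕ) : IsNAF w (fun n => a (n + k)) :=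
  fun i j hij hji => h (i + k) (j + k) (by omega) (by omega)

end IsNAF

section DigitSeries

variable {𝕜 : Type*} [NormedField 𝕜] {z : 𝕜} {a : ℕ → 𝕜} {B : ℝ}

theorem summable_norm_mul_pow_of_norm_le (hz : ‖z‖ < 1) (hB : ∀ n, ‖a n‖ ≤ B) :
    Summable fun n => ‖a n * z ^ n‖ :=
  .of_nonneg_of_le (fun _ => norm_nonneg _)
    (fun n => by
      rw [norm_mul, norm_pow]
      exact mul_le_mul_of_nonneg_right (hB n) (by positivity))
    ((summable_geometric_of_lt_one (norm_nonneg z) hz).mul_left B)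

theorem summable_mul_pow_of_norm_le [CompleteSpace 𝕜] (hz : ‖z‖ < 1) (hB : ∀ n, ‖a n‖ ≤ B) :
    Summable fun n => a n * z ^ n :=
  (summable_norm_mul_pow_of_norm_le hz hB).of_norm

/-- On the support of a `w`-NAF, `n ↦ n / w` is injective: this bounds its series termwise by
a geometric series in `‖z‖ ^ w`. -/
theorem norm_tsum_le_of_isNAF {w : ℕ} (hw : 0 < w) (hz : ‖z‖ < 1) (ha : IsNAF w a)
    (hB : ∀ n, ‖a n‖ ≤ B) : ‖∑' n, a n * z ^ n‖ ≤ B * (1 - ‖z‖ ^ w)⁻¹ := by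
  set f : ℕ → ℝ := fun n => ‖a n * z ^ n‖
  have hf : Summable f := summable_norm_mul_pow_of_norm_le hz hB
  have hzw : ‖z‖ ^ w < 1 := pow_lt_one₀ (norm_nonneg z) hz hw.ne'
  have hinj : Function.Injective fun n : Function.support a => n.1 / w := by
    rintro ⟨n₁, h₁⟩ ⟨n₂, h₂⟩ (heq : n₁ / w = n₂ / w)
    have := heq ▸ Nat.div_add_mod n₁ w
    have := Nat.div_add_mod n₂ w
    have := Nat.mod_lt n₁ hw
    have := Nat.mod_lt n₂ hw
    rcases lt_trichotomy n₁ n₂ with hlt | rfl | hlt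
    · have := ha.add_le hlt h₁ h₂; omega
    · rfl
    · have := ha.add_le hlt h₂ h₁; omega
  have hbound : ∀ n : Function.support a, f n ≤ B * (‖z‖ ^ w) ^ (n.1 / w) := fun n => by
    simp only [f]
    rw [norm_mul, norm_pow, ← pow_mul]
    exact mul_le_mul (hB n) (pow_le_pow_of_le_one (norm_nonneg z) hz.le (Nat.mul_div_le n w))
      (by positivity) ((norm_nonneg _).trans (hB n))
  have hsupp : Function.support f ⊆ Function.support a := fun n hn ha0 => hn (by simp [f, ha0])
  calc ‖∑' n, a n * z ^ n‖ ≤ ∑' n, f n := norm_tsum_le_tsum_norm hf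
    _ = ∑' n : Function.support a, f n := (tsum_subtype_eq_of_support_subset hsupp).symm
    _ ≤ ∑' k, B * (‖z‖ ^ w) ^ k :=
      (hf.subtype _).tsum_le_tsum_of_inj _ hinj (fun _ _ => by
          have := (norm_nonneg (a 0)).trans (hB 0); positivity) hbound
        ((summable_geometric_of_lt_one (by positivity) hzw).mul_left B)
    _ = B * (1 - ‖z‖ ^ w)⁻¹ := by rw [tsum_mul_left, tsum_geometric_of_lt_one (by positivity) hzw]

end DigitSeries

section HeadTail

variable {τ : ℂ} {a : ℕ → ℂ} {w m : ℕ}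

theorem pow_mul_tsum_eq_head_add_tail (hτ : τ ≠ 0) (hs : Summable fun n => a n * τ⁻¹ ^ n)
    (hw : 0 < w) (hgap : ∀ n, m < n → n < m + w → a n = 0) :
    τ ^ m * ∑' n, a n * τ⁻¹ ^ n =
      ∑ i ∈ range (m + 1), a i * τ ^ (m - i) + τ⁻¹ ^ w * ∑' n, a (n + (m + w)) * τ⁻¹ ^ n := by
  have hgap_sum : ∑ i ∈ range (w - 1), a (m + 1 + i) * τ⁻¹ ^ (m + 1 + i) = 0 :=
    sum_eq_zero fun i hi => by rw [hgap _ (by omega) (by rw [mem_range] at hi; omega), zero_mul]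
  rw [← hs.sum_add_tsum_nat_add (m + w), show m + w = m + 1 + (w - 1) by omega, sum_range_add,
    hgap_sum, add_zero, mul_add, mul_sum, ← tsum_mul_left, ← tsum_mul_left]
  congr 1
  · refine sum_congr rfl fun i hi => ?_
    obtain ⟨k, rfl⟩ := Nat.exists_eq_add_of_le (Nat.lt_succ_iff.1 (mem_range.1 hi))
    rw [Nat.add_sub_cancel_left, pow_add, inv_pow]
    field_simp
  · refine tsum_congr fun n => ?_
    rw [show n + (m + 1 + (w - 1)) = n + m + w by omega, pow_add, pow_add, inv_pow τ m]
    field_simp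

/-- The head `∑ i ≤ m, a i τ^(m-i)` lies in the residue class of the digit `a m` modulo
`τ ^ w`, since the other nonzero digits sit at least `w` places further left. -/
theorem norm_le_norm_head {D : Finset ℂ} (hD : IsMinimalNormDigitSet τ w D) (ha : ∀ n, a n ∈ D)
    (hnaf : IsNAF w a) (hm : a m ≠ 0) : ‖a m‖ ≤ ‖∑ i ∈ range (m + 1), a i * τ ^ (m - i)‖ := by
  have hZ : ∀ n, a n ∈ ℤ[τ] := fun n => hD.1.2.1 _ (ha n)
  have hτZ : τ ∈ ℤ[τ] := Algebra.self_mem_adjoin_singleton ℤ τ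
  refine hD.2 _ (ha m) hm _ (Subalgebra.sum_mem _ fun i _ => mul_mem (hZ i) (pow_mem hτZ _))
    ⟨∑ i ∈ range m, a i * τ ^ (m - i - w),
      Subalgebra.sum_mem _ fun i _ => mul_mem (hZ i) (pow_mem hτZ _), ?_⟩
  rw [sum_range_succ, Nat.sub_self, pow_zero, mul_one, add_sub_cancel_right, mul_sum]
  refine sum_congr rfl fun i hi => ?_
  by_cases hai : a i = 0
  · simp [hai]
  · rw [mul_left_comm, ← pow_add, show w + (m - i - w) = m - i by
      have := hnaf.add_le (mem_range.1 hi) hai hm; omega]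

end HeadTail

section Extremal

variable {z : ℂ} {a : ℕ → ℂ} {B : ℝ}

/-- For `‖z‖² = 1/2` the bound `‖∑ aₙ zⁿ‖ ≤ 2B` of a `2`-NAF is the sum of the bounds `B` for
`a₀ + a₁ z` and for `z² ∑ aₙ₊₂ zⁿ`; equality forces equality in both and equal summands. -/
theorem IsNAF.eq_of_norm_tsum_eq_two_mul (hz : ‖z‖ ^ 2 = 2⁻¹) (ha : IsNAF 2 a)
    (hB : ∀ n, ‖a n‖ ≤ B) (hB0 : 0 < B) (h : ‖∑' n, a n * z ^ n‖ = 2 * B) :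
    ∑' n, a n * z ^ n = 2 * a 0 ∧ a 0 = z ^ 2 * ∑' n, a (n + 2) * z ^ n ∧
      ‖∑' n, a (n + 2) * z ^ n‖ = 2 * B := by
  have hz1 : ‖z‖ < 1 := by nlinarith [norm_nonneg z]
  have hsplit : ∑' n, a n * z ^ n = (a 0 + z * a 1) + z ^ 2 * ∑' n, a (n + 2) * z ^ n := by
    rw [← (summable_mul_pow_of_norm_le hz1 hB).sum_add_tsum_nat_add 2, ← tsum_mul_left]
    simp only [sum_range_succ, sum_range_zero, pow_add]
    congr 1
    · ring
    · exact tsum_congr fun n => by ring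
  set u := a 0 + z * a 1
  set v := z ^ 2 * ∑' n, a (n + 2) * z ^ n
  have hshift : ‖∑' n, a (n + 2) * z ^ n‖ ≤ 2 * B := by
    have := norm_tsum_le_of_isNAF two_pos hz1 (ha.comp_add 2) (fun n => hB _)
    rwa [hz, show (1 - (2 : ℝ)⁻¹)⁻¹ = 2 by norm_num, mul_comm] at this
  have hv : ‖v‖ ≤ B := by rw [norm_mul, norm_pow, hz]; linarith
  have hlead : a 0 = 0 → ‖u‖ < B := fun h0 => by
    rw [show u = z * a 1 by simp [u, h0], norm_mul]
    nlinarith [mul_le_mul_of_nonneg_left (hB 1) (norm_nonneg z)]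
  have hu : ‖u‖ ≤ B := by
    by_cases h0 : a 0 = 0
    · exact (hlead h0).le
    · simpa [u, ha 0 1 one_pos one_lt_two h0] using hB 0
  have htri : 2 * B ≤ ‖u‖ + ‖v‖ := h ▸ hsplit ▸ norm_add_le u v
  have huv : u = v := eq_of_norm_eq_of_norm_add_eq (by linarith) (by rw [← hsplit]; linarith)
  have hu0 : u = a 0 := by
    have h0 : a 0 ≠ 0 := fun h0 => by linarith [hlead h0]
    simp [u, ha 0 1 one_pos one_lt_two h0]
  refine ⟨by rw [hsplit, ← huv, hu0]; ring, hu0 ▸ huv, ?_⟩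
  have : ‖v‖ = B := by linarith
  rw [norm_mul, norm_pow, hz] at this
  linarith

end Extremal

section CriticalDigits

variable {τ : ℂ} {w : ℕ} {D : Finset ℂ}

theorem IsReducedResidueDigitSet.eq_zero_of_two_mul_eq (hD : IsReducedResidueDigitSet τ w D)
    {d x : ℂ} (hd : d ∈ D) (hnd : -d ∈ D) (hx : x ∈ ℤ[τ]) (h2 : 2 * d = τ ^ w * x) : d = 0 := by
  by_contra h
  have := hD.2.2.2.1 d hd (-d) hnd h (neg_ne_zero.2 h) ⟨x, hx, by rw [← h2]; ring⟩
  exact h (by linear_combination this / 2)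

/-- Here `τ τ̄ = 2` with `τ̄ = p - τ`, so `h01` reads `τ d₀ = τ̄ d₁`. For `p` odd, `τ` and `τ̄` are
coprime, so `τ ∣ d₁`; for `p` even, `2 ∈ τ² ℤ[τ]` and `τ²/2` has order `2` or `4`, so `-d₀` is
one of `d₁`, `d₂`. -/
theorem IsReducedResidueDigitSet.false_of_critical_digits {p : ℤ}
    (hτ : τ ^ 2 - p * τ + 2 = 0) (hp : p ^ 2 < 8) (hD : IsReducedResidueDigitSet τ 2 D)
    {d₀ d₁ d₂ : ℂ} (h₀ : d₀ ∈ D) (h₁ : d₁ ∈ D) (h₂ : d₂ ∈ D) (hd₀ : d₀ ≠ 0)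
    (h01 : τ ^ 2 * d₀ = 2 * d₁) (h12 : τ ^ 2 * d₁ = 2 * d₂) : False := by
  have hτ0 : τ ≠ 0 := by rintro rfl; norm_num at hτ
  have hd₁ : d₁ ≠ 0 := by rintro rfl; simp [hτ0, hd₀] at h01
  have hτZ : τ ∈ ℤ[τ] := Algebra.self_mem_adjoin_singleton ℤ τ
  have hZ₀ : d₀ ∈ ℤ[τ] := hD.2.1 d₀ h₀
  have hZ₁ : d₁ ∈ ℤ[τ] := hD.2.1 d₁ h₁
  rcases Int.even_or_odd p with ⟨k, rfl⟩ | ⟨k, rfl⟩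
  · have hk : k = 0 ∨ k ^ 2 = 1 := by
      have : -1 ≤ k := by nlinarith
      have : k ≤ 1 := by nlinarith
      interval_cases k <;> simp
    rcases hk with rfl | hk
    · have hneg : d₁ = -d₀ := by push_cast at hτ; linear_combination (-h01 + d₀ * hτ) / 2
      refine hd₀ (hD.eq_zero_of_two_mul_eq h₀ (hneg ▸ h₁) (neg_mem hZ₀) (x := -d₀) ?_)
      push_cast at hτ
      linear_combination d₀ * hτ
    · have hk' : (k : ℂ) ^ 2 = 1 := by exact_mod_cast hk
      push_cast at hτ
      have hneg : d₂ = -d₀ := by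
        linear_combination -h12 / 2 - τ ^ 2 / 4 * h01
          + d₀ / 4 * (τ ^ 2 + 2 * k * τ + 2) * hτ + d₀ * τ ^ 2 * hk'
      refine hd₀ (hD.eq_zero_of_two_mul_eq h₀ (hneg ▸ h₂)
        (mul_mem (sub_mem (one_mem _) (mul_mem (intCast_mem _ k) hτZ)) hZ₀)
        (x := (1 - k * τ) * d₀) ?_)
      linear_combination d₀ * (1 + k * τ) * hτ + 2 * d₀ * τ ^ 2 * hk'
  · refine hD.2.2.1 d₁ h₁ hd₁ ⟨d₀ + d₁ - k * (((2 * k + 1 : ℤ) : ℂ) - τ) * d₁,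
      sub_mem (add_mem hZ₀ hZ₁) (mul_mem (mul_mem (intCast_mem _ k)
        (sub_mem (intCast_mem _ _) hτZ)) hZ₁), mul_left_cancel₀ hτ0 ?_⟩
    push_cast at hτ ⊢
    linear_combination -h01 + (-(k * τ * d₁) - d₁) * hτ

end CriticalDigits

section NonVanishing

variable {τ : ℂ} {w : ℕ} {D : Finset ℂ}

theorem IsReducedResidueDigitSet.false_of_norm_tsum_eq_two_mul {p : ℤ}
    (hτ : τ ^ 2 - p * τ + 2 = 0) (hp : p ^ 2 < 8) (hnorm : ‖τ‖ ^ 2 = 2)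
    (hD : IsReducedResidueDigitSet τ 2 D) {b : ℕ → ℂ} (hb : ∀ n, b n ∈ D) (hnaf : IsNAF 2 b)
    {B : ℝ} (hB : ∀ n, ‖b n‖ ≤ B) (hB0 : 0 < B) (h : ‖∑' n, b n * τ⁻¹ ^ n‖ = 2 * B) :
    False := by
  have hz : ‖τ⁻¹‖ ^ 2 = 2⁻¹ := by rw [norm_inv, inv_pow, hnorm]
  have hτ0 : τ ≠ 0 := by rintro rfl; norm_num at hnorm
  obtain ⟨hE₀, h₀, h₂⟩ := hnaf.eq_of_norm_tsum_eq_two_mul hz hB hB0 h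
  obtain ⟨hE₂, h₂', h₄⟩ :=
    (hnaf.comp_add 2).eq_of_norm_tsum_eq_two_mul hz (fun n => hB _) hB0 h₂
  obtain ⟨hE₄, -⟩ :=
    ((hnaf.comp_add 2).comp_add 2).eq_of_norm_tsum_eq_two_mul hz (fun n => hB _) hB0 h₄
  simp only [zero_add] at hE₂ hE₄ h₂'
  have hd₀ : b 0 ≠ 0 := by
    rintro h0
    rw [hE₀, h0, mul_zero, norm_zero] at h
    exact (mul_pos two_pos hB0).ne h
  refine hD.false_of_critical_digits hτ hp (hb 0) (hb 2) (hb (2 + 2)) hd₀ ?_ ?_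
  · rw [h₀, hE₂]; field_simp
  · rw [h₂', hE₄]; field_simp

theorem norm_tail_bounds_of_tsum_eq_zero (habs : 1 < ‖τ‖) (hw : 0 < w)
    (hD : IsMinimalNormDigitSet τ w D) {a : ℕ → ℂ} (ha : ∀ n, a n ∈ D) (hnaf : IsNAF w a)
    {m : ℕ} (hmax : ∀ n, ‖a n‖ ≤ ‖a m‖) (hm : a m ≠ 0) (hzero : ∑' n, a n * τ⁻¹ ^ n = 0) :
    ‖τ‖ ^ w * ‖a m‖ ≤ ‖∑' n, a (n + (m + w)) * τ⁻¹ ^ n‖ ∧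
      ‖∑' n, a (n + (m + w)) * τ⁻¹ ^ n‖ * (‖τ‖ ^ w - 1) ≤ ‖τ‖ ^ w * ‖a m‖ := by
  have hτ0 : τ ≠ 0 := norm_pos_iff.1 (one_pos.trans habs)
  have hz : ‖τ⁻¹‖ < 1 := by rw [norm_inv]; exact inv_lt_one_of_one_lt₀ habs
  have hs : 1 < ‖τ‖ ^ w := one_lt_pow₀ habs hw.ne'
  have hsplit := pow_mul_tsum_eq_head_add_tail hτ0 (summable_mul_pow_of_norm_le hz hmax) hw
    fun n h₁ h₂ => hnaf m n h₁ h₂ hm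
  rw [hzero, mul_zero, eq_comm, add_eq_zero_iff_eq_neg] at hsplit
  constructor
  · have h := norm_le_norm_head hD ha hnaf hm
    rwa [hsplit, norm_neg, norm_mul, norm_pow, norm_inv, inv_pow,
      le_inv_mul_iff₀ (by positivity)] at h
  · have h := norm_tsum_le_of_isNAF hw hz (hnaf.comp_add (m + w)) fun n => hmax _
    rwa [norm_inv, inv_pow, show (1 - (‖τ‖ ^ w)⁻¹)⁻¹ = ‖τ‖ ^ w / (‖τ‖ ^ w - 1) by field_simp,
      mul_div_assoc', le_div_iff₀ (sub_pos.2 hs), mul_comm (‖a m‖)] at h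

theorem tsum_ne_zero_of_isNAF {p q : ℤ} (hτ : τ ^ 2 - p * τ + q = 0) (hdisc : p ^ 2 < 4 * q)
    (habs : 1 < ‖τ‖) (hw : 2 ≤ w) (hD : IsMinimalNormDigitSet τ w D) {a : ℕ → ℂ}
    (ha : ∀ n, a n ∈ D) (hnaf : IsNAF w a) (h0 : a 0 ≠ 0) : ∑' n, a n * τ⁻¹ ^ n ≠ 0 := by
  intro hzero
  obtain ⟨m, hmax⟩ : ∃ m, ∀ n, ‖a n‖ ≤ ‖a m‖ := by
    obtain ⟨_, ⟨m, rfl⟩, hm⟩ := Set.exists_max_image (Set.range a) norm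
      (D.finite_toSet.subset (Set.range_subset_iff.2 ha)) (Set.range_nonempty a)
    exact ⟨m, fun n => hm _ ⟨n, rfl⟩⟩
  set B := ‖a m‖
  have hB0 : 0 < B := (norm_pos_iff.2 h0).trans_le (hmax 0)
  obtain ⟨hlow, hup⟩ := norm_tail_bounds_of_tsum_eq_zero habs (by omega) hD ha hnaf hmax
    (norm_pos_iff.1 hB0) hzero
  have hs : 1 < ‖τ‖ ^ w := one_lt_pow₀ habs (by omega)
  have hs2 : ‖τ‖ ^ w ≤ 2 := by
    have : ‖τ‖ ^ w * B * (‖τ‖ ^ w - 1) ≤ ‖τ‖ ^ w * B * 1 := by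
      linarith [mul_le_mul_of_nonneg_right hlow (sub_nonneg.2 hs.le)]
    linarith [le_of_mul_le_mul_left this (by positivity)]
  obtain ⟨rfl, rfl⟩ := eq_two_of_norm_pow_le_two hτ hdisc habs hw hs2
  have hnorm : ‖τ‖ ^ 2 = 2 := by
    rw [Complex.sq_norm, normSq_eq_of_quadratic hτ hdisc, Int.cast_ofNat]
  rw [hnorm] at hlow hup
  push_cast at hτ
  exact hD.1.false_of_norm_tsum_eq_two_mul hτ (hdisc.trans_eq (by norm_num)) hnorm (fun n => ha _)
    (hnaf.comp_add _) (fun n => hmax _) hB0 (le_antisymm (by rwa [show (2 : ℝ) - 1 = 1 by norm_num, mul_one] at hup) hlow)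

end NonVanishing

section Fractional

variable {τ : ℂ} {w : ℕ} {D : Finset ℂ}

def fractionalNAF (D : Finset ℂ) (w : ℕ) : Set (ℤ → ℂ) :=
  {η | (∀ j, η j ∈ D) ∧ (∀ j : ℤ, 0 ≤ j → η j = 0) ∧
    (∀ i j : ℤ, i < j → j < i + w → η i ≠ 0 → η j = 0) ∧ η (-1) ≠ 0}

theorem tsum_zpow_eq_inv_mul_tsum {η : ℤ → ℂ} (h : ∀ j : ℤ, 0 ≤ j → η j = 0) :
    ∑' j : ℤ, η j * τ ^ j = τ⁻¹ * ∑' n : ℕ, η (Int.negSucc n) * τ⁻¹ ^ n := by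
  have hinj : Function.Injective Int.negSucc := fun _ _ => Int.negSucc.inj
  rw [← tsum_mul_left, ← hinj.tsum_eq]
  · exact tsum_congr fun n => by rw [zpow_negSucc, inv_pow, pow_succ, mul_inv]; ring
  · intro j hj
    obtain ⟨n, hn⟩ := Int.eq_negSucc_of_lt_zero (a := j) (not_le.1 fun h0 => hj (by simp [h j h0]))
    exact ⟨n, hn.symm⟩

theorem isNAF_comp_negSucc {η : ℤ → ℂ} (h : ∀ i j : ℤ, i < j → j < i + w → η i ≠ 0 → η j = 0) :
    IsNAF w fun n => η (Int.negSucc n) := fun i j hij hji hi => by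
  by_contra hj
  exact hi (h _ _ (by simp only [Int.negSucc_eq]; omega) (by simp only [Int.negSucc_eq]; omega) hj)

theorem tsum_ne_zero_of_mem_fractionalNAF {p q : ℤ} (hτ : τ ^ 2 - p * τ + q = 0)
    (hdisc : p ^ 2 < 4 * q) (habs : 1 < ‖τ‖) (hw : 2 ≤ w) (hD : IsMinimalNormDigitSet τ w D)
    {η : ℤ → ℂ} (hη : η ∈ fractionalNAF D w) : ∑' j : ℤ, η j * τ ^ j ≠ 0 := by
  obtain ⟨hdig, hfrac, hnaf, hlead⟩ := hη
  rw [tsum_zpow_eq_inv_mul_tsum hfrac]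
  exact mul_ne_zero (inv_ne_zero (norm_pos_iff.1 (one_pos.trans habs)))
    (tsum_ne_zero_of_isNAF hτ hdisc habs hw hD (fun n => hdig _) (isNAF_comp_negSucc hnaf) hlead)

theorem isCompact_fractionalNAF : IsCompact (fractionalNAF D w) := by
  have hcoord : ∀ j, Continuous fun η : ℤ → ℂ => η j := continuous_apply
  have hset : fractionalNAF D w =
      (⋂ j, {η | η j ∈ (D : Set ℂ)}) ∩ (⋂ (j : ℤ) (_ : 0 ≤ j), {η | η j = 0}) ∩
      (⋂ (i : ℤ) (j : ℤ) (_ : i < j) (_ : j < i + w), {η | η i * η j = 0}) ∩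
      {η | η (-1) ∈ ((D.erase 0 : Finset ℂ) : Set ℂ)} := by
    ext η
    simp only [fractionalNAF, Set.mem_inter_iff, Set.mem_iInter, Set.mem_ofPred_eq, Finset.mem_coe,
      Finset.mem_erase, mul_eq_zero, or_iff_not_imp_left]
    tauto
  have hclosed : IsClosed (fractionalNAF D w) := by
    rw [hset]
    refine .inter (.inter (.inter ?_ ?_) ?_) ?_
    · exact isClosed_iInter fun j => D.finite_toSet.isClosed.preimage (hcoord j)
    · exact isClosed_iInter fun j => isClosed_iInter fun _ =>
        isClosed_eq (hcoord j) continuous_const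
    · exact isClosed_iInter fun i => isClosed_iInter fun j => isClosed_iInter fun _ =>
        isClosed_iInter fun _ => isClosed_eq ((hcoord i).mul (hcoord j)) continuous_const
    · exact (D.erase 0).finite_toSet.isClosed.preimage (hcoord (-1))
  exact (isCompact_univ_pi fun _ => D.finite_toSet.isCompact).of_isClosed_subset hclosed
    fun η hη j _ => hη.1 j

theorem continuousOn_tsum_mul_zpow (habs : 1 < ‖τ‖) :
    ContinuousOn (fun η : ℤ → ℂ => ∑' j : ℤ, η j * τ ^ j) (fractionalNAF D w) := by
  obtain ⟨M, hM⟩ := (D.finite_toSet.image norm).bddAbove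
  have hz : ‖τ⁻¹‖ < 1 := by rw [norm_inv]; exact inv_lt_one_of_one_lt₀ habs
  refine ContinuousOn.congr (f := fun η => τ⁻¹ * ∑' n : ℕ, η (Int.negSucc n) * τ⁻¹ ^ n) ?_
    fun η hη => tsum_zpow_eq_inv_mul_tsum hη.2.1
  refine continuousOn_const.mul (continuousOn_tsum (u := fun n => M * ‖τ⁻¹‖ ^ n)
    (fun n => ((continuous_apply _).mul continuous_const).continuousOn)
    ((summable_geometric_of_lt_one (norm_nonneg _) hz).mul_left M) fun n η hη => ?_)
  rw [norm_mul, norm_pow]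
  exact mul_le_mul_of_nonneg_right (hM ⟨_, hη.1 _, rfl⟩) (by positivity)

end Fractional

/-- **Lower bound for the fractional value.** Let `τ` be an imaginary quadratic algebraic
integer with `|τ| > 1`, `w ≥ 2`, and `D` a minimal norm representatives digit set modulo
`τ^w`. Then there exists a constant `f_L > 0` (depending only on `τ` and `w`) such that
every fractional `w`-NAF `0.η_{-1}η_{-2}…` with `η_{-1} ≠ 0` satisfies
`|∑_{j≥1} η_{-j} τ^{-j}| ≥ |τ|⁻¹ f_L`. -/
theorem naf_fractional_value_lower_bound (p q : ℤ) (τ : ℂ)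
    (hτq : τ ^ 2 - (p : ℂ) * τ + (q : ℂ) = 0) (hdisc : p ^ 2 < 4 * q)
    (habs : 1 < ‖τ‖) (w : ℕ) (hw : 2 ≤ w)
    (D : Finset ℂ) (hD : IsMinimalNormDigitSet τ w D) :
    ∃ fL : ℝ, 0 < fL ∧ ∀ η : ℤ → ℂ,
      (∀ j, η j ∈ D) → (∀ j : ℤ, 0 ≤ j → η j = 0) →
      (∀ i j : ℤ, i < j → j < i + w → η i ≠ 0 → η j = 0) →
      η (-1) ≠ 0 →
      (‖τ‖)⁻¹ * fL ≤ ‖∑' j : ℤ, η j * τ ^ j‖ := by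
  set value := fun η : ℤ → ℂ => ∑' j : ℤ, η j * τ ^ j
  have hK : IsCompact (value '' fractionalNAF D w) :=
    isCompact_fractionalNAF.image_of_continuousOn (continuousOn_tsum_mul_zpow habs)
  have h0 : (0 : ℂ) ∉ value '' fractionalNAF D w := fun ⟨η, hη, hval⟩ =>
    tsum_ne_zero_of_mem_fractionalNAF hτq hdisc habs hw hD hη hval
  obtain ⟨ε, hε, hball⟩ := Metric.isOpen_iff.1 hK.isClosed.isOpen_compl 0 h0
  refine ⟨‖τ‖ * ε, mul_pos (one_pos.trans habs) hε, fun η h₁ h₂ h₃ h₄ => ?_⟩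
  rw [inv_mul_cancel_left₀ (one_pos.trans habs).ne']
  by_contra! hlt
  exact hball (mem_ball_zero_iff.2 hlt) ⟨η, ⟨h₁, h₂, h₃, h₄⟩, rfl⟩
end

section
/- Let τ be an imaginary quadratic algebraic integer with |τ| > 1, w ≥ 2, and D the minimal norm representatives digit set modulo τ^w. Then every element z ∈ Z[τ] admits a unique finite w-NAF expansion z = Σ_{j=0}^{ℓ−1} η_j τ^j with digits η_j ∈ D such that every block of w consecutive digits contains at most one nonzero digit; i.e., D is a width-w non-adjacent digit set. -/
/-!
Since `τ τ̄ = q` and `τ + τ̄ = p`, the norm `|z|²` of every `z ∈ ℤ[τ]` is a natural number, so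
one may induct on it. Existence is the greedy algorithm: if `τ ∣ z`, write `z = τ x`; otherwise
let `d` be the digit of `z` modulo `τ^w` and write `z = d + τ^w x`. Minimality gives `|d| ≤ |z|`,
hence `q^w |x|² = |z - d|² ≤ 4 |z|² - |z + d|²`, and `|x| < |z|` unless `q = w = 2` and `d = -z`.
In that exceptional case `τ² x = 2 z` forces `p` to be even: either `τ² = -2` and `x = -z` is a
digit, or `τ⁴ = -4` and one further step reaches the digit `-z`.

Uniqueness: the value of a `w`-NAF is divisible by `τ` iff its first digit is `0`, and otherwise
it is congruent to its first digit modulo `τ^w`; so the value determines the first digit, which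
can then be cancelled.
-/

open Complex ComplexConjugate

local notation "ℤ[" τ "]" => Algebra.adjoin ℤ ({τ} : Set ℂ)

section QuadraticInteger

variable {p q : ℤ} {τ : ℂ}

lemma conj_eq_sub (hτq : τ ^ 2 - p * τ + q = 0) (hdisc : p ^ 2 < 4 * q) :
    conj τ = p - τ := by
  have hconj : conj τ ^ 2 - p * conj τ + q = 0 := by
    simpa using congrArg conj hτq
  have hne : conj τ ≠ τ := by
    rintro h
    obtain ⟨r, rfl⟩ := conj_eq_iff_real.mp h
    have hr : r ^ 2 - p * r + q = 0 := by exact_mod_cast hτq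
    have hdisc' : (p : ℝ) ^ 2 < 4 * q := by exact_mod_cast hdisc
    nlinarith [sq_nonneg (2 * r - p)]
  have h : (conj τ - τ) * (conj τ - (p - τ)) = 0 := by linear_combination hconj - hτq
  exact sub_eq_zero.mp ((mul_eq_zero.mp h).resolve_left (sub_ne_zero.mpr hne))

lemma normSq_eq_of_sq_sub (hτq : τ ^ 2 - p * τ + q = 0) (hdisc : p ^ 2 < 4 * q) :
    normSq τ = q := by
  have h : (normSq τ : ℂ) = q := by
    rw [← mul_conj, conj_eq_sub hτq hdisc]
    linear_combination -hτq
  exact_mod_cast h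

lemma exists_int_eq_add_mul (hτq : τ ^ 2 - p * τ + q = 0) {z : ℂ} (hz : z ∈ ℤ[τ]) :
    ∃ a b : ℤ, z = a + b * τ := by
  induction hz using Algebra.adjoin_induction with
  | mem x hx =>
    rw [Set.mem_singleton_iff.mp hx]
    exact ⟨0, 1, by simp⟩
  | algebraMap r => exact ⟨r, 0, by simp⟩
  | add x y _ _ ihx ihy =>
    obtain ⟨a, b, rfl⟩ := ihx
    obtain ⟨c, e, rfl⟩ := ihy
    exact ⟨a + c, b + e, by push_cast; ring⟩
  | mul x y _ _ ihx ihy =>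
    obtain ⟨a, b, rfl⟩ := ihx
    obtain ⟨c, e, rfl⟩ := ihy
    exact ⟨a * c - q * b * e, a * e + b * c + p * b * e, by
      push_cast; linear_combination (b * e : ℂ) * hτq⟩

lemma exists_nat_normSq_eq (hτq : τ ^ 2 - p * τ + q = 0) (hdisc : p ^ 2 < 4 * q)
    {z : ℂ} (hz : z ∈ ℤ[τ]) : ∃ n : ℕ, normSq z = n := by
  obtain ⟨a, b, rfl⟩ := exists_int_eq_add_mul hτq hz
  have h : (normSq (a + b * τ) : ℂ) = ((a ^ 2 + p * a * b + q * b ^ 2 : ℤ) : ℂ) := by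
    rw [← mul_conj, map_add, map_mul, conj_eq_sub hτq hdisc]
    simp only [map_intCast]
    push_cast
    linear_combination (-(b : ℂ) ^ 2) * hτq
  have h' : normSq (a + b * τ) = ((a ^ 2 + p * a * b + q * b ^ 2 : ℤ) : ℝ) := by exact_mod_cast h
  have hnonneg : 0 ≤ a ^ 2 + p * a * b + q * b ^ 2 := by
    exact_mod_cast h' ▸ normSq_nonneg _
  refine ⟨(a ^ 2 + p * a * b + q * b ^ 2).toNat, ?_⟩
  rw [h']
  exact_mod_cast (Int.toNat_of_nonneg hnonneg).symm

lemma induction_on_normSq (hτq : τ ^ 2 - p * τ + q = 0) (hdisc : p ^ 2 < 4 * q) {P : ℂ → Prop}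
    (h : ∀ z ∈ ℤ[τ], (∀ y ∈ ℤ[τ], normSq y < normSq z → P y) → P z) : ∀ z ∈ ℤ[τ], P z := by
  suffices ∀ n : ℕ, ∀ z ∈ ℤ[τ], normSq z = n → P z by
    intro z hz
    obtain ⟨n, hn⟩ := exists_nat_normSq_eq hτq hdisc hz
    exact this n z hz hn
  intro n
  induction n using Nat.strong_induction_on with
  | _ n ih =>
    intro z hz hn
    refine h z hz fun y hy hlt => ?_
    obtain ⟨m, hm⟩ := exists_nat_normSq_eq hτq hdisc hy
    exact ih m (by rw [hm, hn] at hlt; exact_mod_cast hlt) y hy hm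

end QuadraticInteger

lemma tsum_eq_add_pow_mul_tsum {η : ℕ → ℂ} {k : ℕ} (hfin : ∃ ℓ, ∀ j, ℓ ≤ j → η j = 0)
    (hk : 1 ≤ k) (hgap : ∀ j, 0 < j → j < k → η j = 0) (τ : ℂ) :
    ∑' j, η j * τ ^ j = η 0 + τ ^ k * ∑' j, η (j + k) * τ ^ j := by
  obtain ⟨ℓ, hℓ⟩ := hfin
  have hsum : Summable fun j => η j * τ ^ j :=
    summable_of_ne_finset_zero (s := Finset.range ℓ) fun j hj => by
      rw [hℓ j (by simpa using hj), zero_mul]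
  rw [← hsum.sum_add_tsum_nat_add k, Finset.sum_eq_single_of_mem 0 (by simp; omega)
    fun j hj hj0 => by rw [hgap j (by omega) (by simpa using hj), zero_mul], ← tsum_mul_left]
  simp only [pow_zero, mul_one, pow_add]
  congr 1
  exact tsum_congr fun j => by ring

structure IsWNAF (w : ℕ) (D : Finset ℂ) (η : ℕ → ℂ) : Prop where
  mem : ∀ j, η j ∈ D
  eventually_zero : ∃ ℓ, ∀ j, ℓ ≤ j → η j = 0
  nonadjacent : ∀ i j : ℕ, i < j → j < i + w → η i ≠ 0 → η j = 0

namespace IsWNAF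

variable {τ : ℂ} {w : ℕ} {D : Finset ℂ} {η η' : ℕ → ℂ}

lemma shift (hη : IsWNAF w D η) (k : ℕ) : IsWNAF w D fun j => η (j + k) where
  mem j := hη.mem (j + k)
  eventually_zero := by
    obtain ⟨ℓ, hℓ⟩ := hη.eventually_zero
    exact ⟨ℓ, fun j hj => hℓ (j + k) (by omega)⟩
  nonadjacent i j hij hjw := hη.nonadjacent (i + k) (j + k) (by omega) (by omega)

lemma tsum_mem (hη : IsWNAF w D η) (hD : ∀ d ∈ D, d ∈ ℤ[τ]) : ∑' j, η j * τ ^ j ∈ ℤ[τ] := by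
  obtain ⟨ℓ, hℓ⟩ := hη.eventually_zero
  rw [tsum_eq_sum (s := Finset.range ℓ) fun j hj => by rw [hℓ j (by simpa using hj), zero_mul]]
  exact Subalgebra.sum_mem _ fun j _ =>
    mul_mem (hD _ (hη.mem j)) (pow_mem (Algebra.self_mem_adjoin_singleton ℤ τ) j)

lemma tsum_eq_add_pow_mul_of_ne_zero (hη : IsWNAF w D η) (hw : 1 ≤ w) (h0 : η 0 ≠ 0) :
    ∑' j, η j * τ ^ j = η 0 + τ ^ w * ∑' j, η (j + w) * τ ^ j :=
  tsum_eq_add_pow_mul_tsum hη.eventually_zero hw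
    (fun j hj hjw => hη.nonadjacent 0 j hj (by omega) h0) τ

lemma exists_tsum_eq_mul_iff_apply_zero_eq_zero (hη : IsWNAF w D η) (hw : 1 ≤ w)
    (hD : IsReducedResidueDigitSet τ w D) :
    (∃ y ∈ ℤ[τ], ∑' j, η j * τ ^ j = τ * y) ↔ η 0 = 0 := by
  obtain ⟨-, hDA, hDτ, -, -⟩ := hD
  constructor
  · rintro ⟨y, hy, hηy⟩
    by_contra h0
    refine hDτ _ (hη.mem 0) h0 ⟨y - τ ^ (w - 1) * ∑' j, η (j + w) * τ ^ j,
      sub_mem hy (mul_mem (pow_mem (Algebra.self_mem_adjoin_singleton ℤ τ) _)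
        ((hη.shift w).tsum_mem hDA)), ?_⟩
    rw [hη.tsum_eq_add_pow_mul_of_ne_zero hw h0, ← mul_pow_sub_one (by omega : w ≠ 0)] at hηy
    linear_combination hηy
  · intro h0
    refine ⟨_, (hη.shift 1).tsum_mem hDA, ?_⟩
    rw [tsum_eq_add_pow_mul_tsum hη.eventually_zero le_rfl (fun j _ _ => by omega) τ, h0,
      zero_add, pow_one]

lemma apply_zero_eq_of_tsum_eq (hη : IsWNAF w D η) (hη' : IsWNAF w D η') (hw : 1 ≤ w)
    (hD : IsReducedResidueDigitSet τ w D) (h : ∑' j, η j * τ ^ j = ∑' j, η' j * τ ^ j) :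
    η 0 = η' 0 := by
  have hzero : η 0 = 0 ↔ η' 0 = 0 := by
    rw [← hη.exists_tsum_eq_mul_iff_apply_zero_eq_zero hw hD,
      ← hη'.exists_tsum_eq_mul_iff_apply_zero_eq_zero hw hD, h]
  by_cases h0 : η 0 = 0
  · rw [h0, hzero.mp h0]
  have h0' : η' 0 ≠ 0 := hzero.not.mp h0
  rw [hη.tsum_eq_add_pow_mul_of_ne_zero hw h0, hη'.tsum_eq_add_pow_mul_of_ne_zero hw h0'] at h
  exact hD.2.2.2.1 _ (hη.mem 0) _ (hη'.mem 0) h0 h0' ⟨_,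
    sub_mem ((hη'.shift w).tsum_mem hD.2.1) ((hη.shift w).tsum_mem hD.2.1),
    by linear_combination h⟩

theorem eq_of_tsum_eq (hη : IsWNAF w D η) (hη' : IsWNAF w D η') (hw : 1 ≤ w) (hτ : τ ≠ 0)
    (hD : IsReducedResidueDigitSet τ w D) (h : ∑' j, η j * τ ^ j = ∑' j, η' j * τ ^ j) :
    η = η' := by
  obtain ⟨ℓ, hℓ⟩ := hη.eventually_zero
  obtain ⟨ℓ', hℓ'⟩ := hη'.eventually_zero
  suffices ∀ n, ∀ η η' : ℕ → ℂ, IsWNAF w D η → IsWNAF w D η' → (∀ j, n ≤ j → η j = η' j) →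
      ∑' j, η j * τ ^ j = ∑' j, η' j * τ ^ j → η = η' from
    this (ℓ + ℓ') η η' hη hη' (fun j hj => by rw [hℓ j (by omega), hℓ' j (by omega)]) h
  intro n
  induction n with
  | zero => exact fun η η' _ _ hn _ => funext fun j => hn j (Nat.zero_le j)
  | succ n ih =>
    intro η η' hη hη' hn h
    have h0 := hη.apply_zero_eq_of_tsum_eq hη' hw hD h
    obtain ⟨k, hk, hgap⟩ : ∃ k, 1 ≤ k ∧ ∀ j, 0 < j → j < k → η j = 0 ∧ η' j = 0 := by
      by_cases hη0 : η 0 = 0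
      · exact ⟨1, le_rfl, fun j hj hj1 => by omega⟩
      · exact ⟨w, hw, fun j hj hjw => ⟨hη.nonadjacent 0 j hj (by omega) hη0,
          hη'.nonadjacent 0 j hj (by omega) (h0 ▸ hη0)⟩⟩
    have htail : ∑' j, η (j + k) * τ ^ j = ∑' j, η' (j + k) * τ ^ j := by
      rw [tsum_eq_add_pow_mul_tsum hη.eventually_zero hk (fun j h1 h2 => (hgap j h1 h2).1),
        tsum_eq_add_pow_mul_tsum hη'.eventually_zero hk (fun j h1 h2 => (hgap j h1 h2).2),
        h0] at h
      exact mul_left_cancel₀ (pow_ne_zero k hτ) (add_left_cancel h)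
    have hshift := ih _ _ (hη.shift k) (hη'.shift k) (fun j hj => hn (j + k) (by omega)) htail
    funext j
    obtain rfl | hj := Nat.eq_zero_or_pos j
    · exact h0
    obtain hjk | hjk := lt_or_ge j k
    · rw [(hgap j hj hjk).1, (hgap j hj hjk).2]
    · obtain ⟨i, rfl⟩ := Nat.exists_eq_add_of_le' hjk
      exact congrFun hshift i

end IsWNAF

def prependDigit (d : ℂ) (k : ℕ) (η : ℕ → ℂ) : ℕ → ℂ :=
  fun j => if j = 0 then d else if j < k then 0 else η (j - k)

namespace IsWNAF

variable {w k : ℕ} {D : Finset ℂ} {η : ℕ → ℂ} {d : ℂ}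

lemma prependDigit (hη : IsWNAF w D η) (hd : d ∈ D) (h0 : 0 ∈ D) (hk : 1 ≤ k)
    (hdk : d ≠ 0 → w ≤ k) : IsWNAF w D (prependDigit d k η) where
  mem j := by
    unfold _root_.prependDigit
    split_ifs
    exacts [hd, h0, hη.mem _]
  eventually_zero := by
    obtain ⟨ℓ, hℓ⟩ := hη.eventually_zero
    refine ⟨ℓ + k, fun j hj => ?_⟩
    simp only [_root_.prependDigit, if_neg (show j ≠ 0 by omega), if_neg (show ¬j < k by omega)]
    exact hℓ _ (by omega)
  nonadjacent i j hij hjw hi := by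
    unfold _root_.prependDigit at hi ⊢
    have hj0 : j ≠ 0 := by omega
    split_ifs at hi with hi0 hik
    · simp [hj0, show j < k by have := hdk hi; omega]
    · exact absurd rfl hi
    · simp only [hj0, if_neg (show ¬j < k by omega), if_false]
      exact hη.nonadjacent (i - k) (j - k) (by omega) (by omega) hi

end IsWNAF

def HasWNAF (τ : ℂ) (w : ℕ) (D : Finset ℂ) (z : ℂ) : Prop :=
  ∃ η, IsWNAF w D η ∧ z = ∑' j, η j * τ ^ j

namespace HasWNAF

variable {τ : ℂ} {w k : ℕ} {D : Finset ℂ} {d x : ℂ}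

lemma zero (h0 : 0 ∈ D) : HasWNAF τ w D 0 :=
  ⟨0, ⟨fun _ => h0, ⟨0, fun _ _ => rfl⟩, fun _ _ _ _ h => absurd rfl h⟩, by simp⟩

lemma add_pow_mul (hx : HasWNAF τ w D x) (hd : d ∈ D) (h0 : 0 ∈ D) (hk : 1 ≤ k)
    (hdk : d ≠ 0 → w ≤ k) : HasWNAF τ w D (d + τ ^ k * x) := by
  obtain ⟨η, hη, rfl⟩ := hx
  have hprep := hη.prependDigit hd h0 hk hdk
  refine ⟨_, hprep, ?_⟩
  rw [tsum_eq_add_pow_mul_tsum hprep.eventually_zero hk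
    (fun j hj hjk => by simp [prependDigit, hj.ne', hjk])]
  simp [prependDigit, show k ≠ 0 by omega]

lemma of_mem (hd : d ∈ D) (h0 : 0 ∈ D) (hw : 1 ≤ w) : HasWNAF τ w D d := by
  simpa using (zero h0).add_pow_mul hd h0 hw fun _ => le_rfl

end HasWNAF

lemma normSq_lt_or_eq_neg_of_sub_eq {τ z d x : ℂ} {w : ℕ} (hτ : 2 ≤ normSq τ) (hw : 2 ≤ w)
    (hz : z ≠ 0) (hd : ‖d‖ ≤ ‖z‖) (h : z - d = τ ^ w * x) :
    normSq x < normSq z ∨ (normSq τ = 2 ∧ w = 2 ∧ d = -z) := by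
  rw [or_iff_not_imp_left, not_lt]
  intro hzx
  have hdz : normSq d ≤ normSq z := by
    simpa only [normSq_eq_norm_sq] using pow_le_pow_left₀ (norm_nonneg d) hd 2
  have hpar : normSq (z + d) + normSq (z - d) = 2 * normSq z + 2 * normSq d := by
    rw [normSq_add, normSq_sub]; ring
  have hzd : normSq (z - d) = normSq τ ^ w * normSq x := by rw [h, normSq_mul, map_pow]
  have hτ2 : normSq τ ^ 2 ≤ normSq τ ^ w := pow_le_pow_right₀ (by linarith) hw
  have h4 : 4 ≤ normSq τ ^ w := by nlinarith
  have hpos := normSq_pos.mpr hz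
  -- `4 |z|² ≤ |τ|^(2w) |z|² ≤ |τ|^(2w) |x|² = |z - d|² ≤ 4 |z|² - |z + d|²` forces equality
  have hle : normSq τ ^ w ≤ 4 ∧ normSq (z + d) ≤ 0 := by
    have := mul_le_mul_of_nonneg_left hzx (pow_nonneg (normSq_nonneg τ) w)
    have := mul_le_mul_of_nonneg_right h4 hpos.le
    constructor <;> nlinarith [normSq_nonneg (z + d)]
  have hτeq : normSq τ = 2 := by nlinarith
  refine ⟨hτeq, ?_, ?_⟩
  · have : (2 : ℝ) ^ w ≤ 2 ^ 2 := by rw [hτeq] at hle; linarith [hle.1]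
    have := (pow_le_pow_iff_right₀ one_lt_two).mp this
    omega
  · exact (neg_eq_of_add_eq_zero_right
      (normSq_eq_zero.mp (le_antisymm hle.2 (normSq_nonneg _)))).symm

section Existence

variable {τ : ℂ} {w : ℕ} {D : Finset ℂ} {z x : ℂ}

lemma hasWNAF_or_normSq_eq_two (hτ : 2 ≤ normSq τ) (hw : 2 ≤ w)
    (hD : IsMinimalNormDigitSet τ w D) (hz : z ∈ ℤ[τ]) (hz0 : z ≠ 0)
    (ih : ∀ y ∈ ℤ[τ], normSq y < normSq z → HasWNAF τ w D y) :
    HasWNAF τ w D z ∨ (normSq τ = 2 ∧ w = 2 ∧ (¬∃ y ∈ ℤ[τ], z = τ * y) ∧ -z ∈ D ∧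
      ∃ x ∈ ℤ[τ], τ ^ 2 * x = 2 * z ∧ (HasWNAF τ w D x → HasWNAF τ w D z)) := by
  obtain ⟨⟨h0, -, -, -, hdigit⟩, hmin⟩ := hD
  by_cases hzτ : ∃ y ∈ ℤ[τ], z = τ * y
  · obtain ⟨y, hy, rfl⟩ := hzτ
    have hy0 : y ≠ 0 := right_ne_zero_of_mul hz0
    have hlt : normSq y < normSq (τ * y) := by
      rw [normSq_mul]
      nlinarith [normSq_pos.mpr hy0]
    left
    simpa using (ih y hy hlt).add_pow_mul h0 h0 le_rfl fun h => absurd rfl h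
  obtain ⟨d, hd, x, hx, hzdx⟩ := hdigit z hz hzτ
  have hd0 : d ≠ 0 := by
    rintro rfl
    refine hzτ ⟨τ ^ (w - 1) * x,
      mul_mem (pow_mem (Algebra.self_mem_adjoin_singleton ℤ τ) _) hx, ?_⟩
    rw [← mul_assoc, mul_pow_sub_one (by omega : w ≠ 0)]
    linear_combination hzdx
  have hstep (hxN : HasWNAF τ w D x) : HasWNAF τ w D z := by
    rw [show z = d + τ ^ w * x by linear_combination hzdx]
    exact hxN.add_pow_mul hd h0 (by omega) fun _ => le_rfl
  obtain hlt | ⟨hτ2, rfl, rfl⟩ :=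
    normSq_lt_or_eq_neg_of_sub_eq hτ hw hz0 (hmin d hd hd0 z hz ⟨x, hx, hzdx⟩) hzdx
  · exact .inl (hstep (ih x hx hlt))
  · exact .inr ⟨hτ2, rfl, hzτ, hd, x, hx, by linear_combination -hzdx, hstep⟩

lemma even_of_sq_mul_eq_two_mul {p : ℤ} (hτq : τ ^ 2 - p * τ + 2 = 0) (hz : z ∈ ℤ[τ])
    (hzτ : ¬∃ y ∈ ℤ[τ], z = τ * y) (hx : x ∈ ℤ[τ]) (hτx : τ ^ 2 * x = 2 * z) : Even p := by
  have hτ0 : τ ≠ 0 := by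
    rintro rfl
    norm_num at hτq
  -- `τ (p - τ) = 2`, so `τ x = (p - τ) z` and `p z = τ (x + z)`; for odd `p` this makes `τ ∣ z`
  have hpz : τ * x = (p - τ) * z :=
    mul_left_cancel₀ hτ0 (by linear_combination hτx + z * hτq)
  by_contra hodd
  obtain ⟨m, rfl⟩ := Int.not_even_iff_odd.mp hodd
  have hτA := Algebra.self_mem_adjoin_singleton ℤ τ
  refine hzτ ⟨x + z - m * (((2 * m + 1 : ℤ) : ℂ) - τ) * z, sub_mem (add_mem hx hz)
    (mul_mem (mul_mem (Subalgebra.intCast_mem _ m)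
      (sub_mem (Subalgebra.intCast_mem _ (2 * m + 1)) hτA)) hz), ?_⟩
  push_cast at hpz hτq ⊢
  linear_combination -hpz - m * z * hτq

lemma hasWNAF_of_sq_mul_eq_two_mul {p : ℤ} (hτq : τ ^ 2 - p * τ + 2 = 0)
    (hp : p ^ 2 < 8) (hτ : normSq τ = 2) (hD : IsMinimalNormDigitSet τ 2 D) (hz : z ∈ ℤ[τ])
    (hzτ : ¬∃ y ∈ ℤ[τ], z = τ * y) (hzD : -z ∈ D)
    (ih : ∀ y ∈ ℤ[τ], normSq y < normSq z → HasWNAF τ 2 D y) (hx : x ∈ ℤ[τ])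
    (hτx : τ ^ 2 * x = 2 * z) : HasWNAF τ 2 D x := by
  have h0 := hD.1.1
  obtain ⟨m, rfl⟩ := even_of_sq_mul_eq_two_mul hτq hz hzτ hx hτx
  obtain hτ2 | hτ4 : τ ^ 2 = -2 ∨ τ ^ 4 = -4 := by
    have : m = -1 ∨ m = 0 ∨ m = 1 := by
      have : -1 ≤ m ∧ m ≤ 1 := ⟨by nlinarith, by nlinarith⟩
      omega
    rcases this with rfl | rfl | rfl
    · right; push_cast at hτq; linear_combination (τ ^ 2 - 2 * τ + 2) * hτq
    · left; push_cast at hτq; linear_combination hτq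
    · right; push_cast at hτq; linear_combination (τ ^ 2 + 2 * τ + 2) * hτq
  · have : x = -z := by linear_combination (-1 / 2 : ℂ) * hτx + x / 2 * hτ2
    exact this ▸ HasWNAF.of_mem hzD h0 one_le_two
  -- as `τ⁴ = -4`, a second exceptional step reaches the digit `-z`
  have hx0 : x ≠ 0 := by
    rintro rfl
    exact hzτ ⟨0, zero_mem _, by linear_combination -hτx / 2⟩
  have hxz : normSq x = normSq z := by
    have := congrArg normSq hτx
    simp only [normSq_mul, map_pow, hτ] at this
    norm_num at this
    linarith
  obtain h | ⟨-, -, -, -, x₁, -, hτx₁, hx₁x⟩ :=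
    hasWNAF_or_normSq_eq_two hτ.ge le_rfl hD hx hx0 (hxz ▸ ih)
  · exact h
  · have : x₁ = -z := by
      linear_combination (-1 / 4 : ℂ) * (τ ^ 2 * hτx₁ + 2 * hτx) + x₁ / 4 * hτ4
    exact hx₁x (this ▸ HasWNAF.of_mem hzD h0 one_le_two)

theorem hasWNAF_of_mem_adjoin {p q : ℤ} (hτq : τ ^ 2 - p * τ + q = 0) (hdisc : p ^ 2 < 4 * q)
    (habs : 1 < ‖τ‖) (hw : 2 ≤ w) (hD : IsMinimalNormDigitSet τ w D) :
    ∀ z ∈ ℤ[τ], HasWNAF τ w D z := by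
  have hτ := normSq_eq_of_sq_sub hτq hdisc
  have hq : 1 < q := by
    have : (1 : ℝ) < q := by rw [← hτ, normSq_eq_norm_sq]; nlinarith
    exact_mod_cast this
  have h2τ : 2 ≤ normSq τ := by rw [hτ]; exact_mod_cast hq
  refine induction_on_normSq hτq hdisc fun z hz ih => ?_
  obtain rfl | hz0 := eq_or_ne z 0
  · exact HasWNAF.zero hD.1.1
  obtain h | ⟨hτ2, rfl, hzτ, hzD, x, hx, hτx, hxz⟩ :=
    hasWNAF_or_normSq_eq_two h2τ hw hD hz hz0 ih
  · exact h
  obtain rfl : q = 2 := by exact_mod_cast hτ ▸ hτ2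
  exact hxz (hasWNAF_of_sq_mul_eq_two_mul (by exact_mod_cast hτq) (by linarith) hτ2 hD hz hzτ hzD
    ih hx hτx)

end Existence

/-- **Existence and uniqueness of `w`-NAFs for lattice points.** Let `τ` be an imaginary
quadratic algebraic integer with `|τ| > 1`, `w ≥ 2`, and `D` the minimal norm
representatives digit set modulo `τ^w`. Then every `z ∈ ℤ[τ]` admits a unique finite
`w`-NAF expansion `z = ∑_j η_j τ^j`, i.e. `D` is a width-`w` non-adjacent digit set. -/
theorem wNAF_exists_unique (p q : ℤ) (τ : ℂ)
    (hτq : τ ^ 2 - (p : ℂ) * τ + (q : ℂ) = 0) (hdisc : p ^ 2 < 4 * q)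
    (habs : 1 < ‖τ‖) (w : ℕ) (hw : 2 ≤ w)
    (D : Finset ℂ) (hD : IsMinimalNormDigitSet τ w D) :
    ∀ z ∈ Algebra.adjoin ℤ ({τ} : Set ℂ),
      ∃! η : ℕ → ℂ,
        (∀ j, η j ∈ D) ∧ (∃ ℓ : ℕ, ∀ j, ℓ ≤ j → η j = 0) ∧
        (∀ i j : ℕ, i < j → j < i + w → η i ≠ 0 → η j = 0) ∧
        z = ∑' j : ℕ, η j * τ ^ j := by
  intro z hz
  obtain ⟨η, hη, rfl⟩ := hasWNAF_of_mem_adjoin hτq hdisc habs hw hD z hz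
  refine ⟨η, ⟨hη.mem, hη.eventually_zero, hη.nonadjacent, rfl⟩, ?_⟩
  rintro η' ⟨hmem, hfin, hnaf, hval⟩
  exact IsWNAF.eq_of_tsum_eq ⟨hmem, hfin, hnaf⟩ hη (by omega)
    (norm_pos_iff.mp (one_pos.trans habs)) hD.1 hval.symm
end
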